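/- arXiv:1403.3323 — 4 statements merged into one kernel-verified Lean document; each statement's English description precedes it below -/
import Mathlib

section
/- Let n, m, l be positive integers and k_1, ..., k_l integers with 0 < k_1 < k_2 < ... < k_l ≤ n/2. The generating function Σ_P w(P) over all families P = (P_1, ..., P_m, P_{1⁺}, ..., P_{l⁺}) of non-intersecting lattice paths, where for 1 ≤ s ≤ m the path P_s runs from A_s = (s, −s+1) to E_s = (n+s, n−s+1), for 1 ≤ t ≤ l the path P_{t⁺} runs from B_{t⁺} = (k_t+1, k_t) to E_t = (n−k_t+1, n−k_t), no path ever crossing above the main diagonal x = y, and where the weight of a family P is w(P) = 2^{T(P)} with T(P) the number of touching points of the paths of P with the main diagonal, equals det(N), where N is the matrix with rows and columns indexed by {1, ..., m, 1⁺, ..., l⁺} and entries: N_{i,j} = C(2n, n+j−i) + C(2n, n−i−j+1) for 1 ≤ i, j ≤ m; N_{i,t⁺} = C(2n−2k_t, n−k_t−i+1) + C(2n−2k_t, n−k_t−i) for 1 ≤ i ≤ m; N_{t⁺,j} = C(2n−2k_t, n−k_t−j+1) + C(2n−2k_t, n−k_t−j) for 1 ≤ j ≤ m; and N_{t⁺,t̂⁺}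 = C(2n−2k_t−2k_{t̂}, n−k_t−k_{t̂}) + C(2n−2k_t−2k_{t̂}, n−k_t−k_{t̂}−1) for 1 ≤ t, t̂ ≤ l. -/
/-!
Lindström–Gessel–Viennot. The entry `N i j` is the weighted count of single paths from the
`i`-th start to the `j`-th end weakly below the diagonal, the weight `2 ^ (touchings)` giving
`C(T, a) + C(T, b)` by Pascal's recursion. Expanding `det N` over permutations `σ` thus sums
`sign σ` times the weights of path families joining the starts to the `σ`-permuted ends.
Exchanging the tails of the first two intersecting paths after their first common point is a
weight-preserving, sign-reversing involution on the intersecting families, so only the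
non-intersecting ones survive. For these, planarity forces `σ = 1`: the `B`'s and the ends
`E t⁺` lie next to the diagonal, so no path can overtake one starting or ending there.
-/

/-- Binomial coefficient `C(p,q)` for integers, equal to `0` unless `0 ≤ q ≤ p`. -/
def ch (p q : ℤ) : ℤ := if 0 ≤ q ∧ q ≤ p then (p.toNat).choose q.toNat else 0

/-- Sum `Σ_{r=a}^{b} f r` with the signed convention: the usual sum if `a ≤ b`,
`0` if `b = a - 1`, and `-Σ_{r=b+1}^{a-1} f r` if `b < a - 1`. -/
noncomputable def ssum (a b : ℤ) (f : ℤ → ℤ) : ℤ :=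
  if a ≤ b then ∑ r ∈ Finset.Icc a b, f r else -∑ r ∈ Finset.Icc (b + 1) (a - 1), f r

/-- A lattice path in `ℤ²`: a nonempty list of lattice points in which each consecutive
step is a unit step to the right or up. -/
def IsLP (P : List (ℤ × ℤ)) : Prop :=
  P ≠ [] ∧ P.Chain' (fun p q => q = (p.1 + 1, p.2) ∨ q = (p.1, p.2 + 1))

/-- The index set for the families of lattice paths of Proposition 3.4: the indices
`1, …, m` followed by `1⁺, …, l⁺`. -/
abbrev QIdx (m l : ℕ) : Type := Fin m ⊕ Fin l

/-- Starting points `A s = (s, -s+1)` for `s = 1, …, m` and `B t⁺ = (k t + 1, k t)`. -/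
def startPt4 (m l : ℕ) (k : Fin l → ℤ) : QIdx m l → ℤ × ℤ
  | Sum.inl s => ((s : ℤ) + 1, -(s : ℤ))
  | Sum.inr t => (k t + 1, k t)

/-- Ending points `E s = (n+s, n-s+1)` for `s = 1, …, m` and
`E t = (n - k t + 1, n - k t)`. -/
def endPt4 (n m l : ℕ) (k : Fin l → ℤ) : QIdx m l → ℤ × ℤ
  | Sum.inl s => ((n : ℤ) + s + 1, (n : ℤ) - s)
  | Sum.inr t => ((n : ℤ) - k t + 1, (n : ℤ) - k t)

/-- The set of families of non-intersecting lattice paths from the `A`'s and `B`'s to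
the `E`'s, never crossing above the main diagonal `x = y`. -/
def Fam4 (n m l : ℕ) (k : Fin l → ℤ) : Set (QIdx m l → List (ℤ × ℤ)) :=
  {F | (∀ i, IsLP (F i) ∧ (F i).head? = some (startPt4 m l k i) ∧
          (F i).getLast? = some (endPt4 n m l k i) ∧ ∀ p ∈ F i, p.2 ≤ p.1) ∧
       ∀ i j, i ≠ j → ∀ p ∈ F i, p ∉ F j}

/-- The total number of touching points of the paths of the family `F` with the main
diagonal `x = y`. -/
def touchCount {m l : ℕ} (F : QIdx m l → List (ℤ × ℤ)) : ℕ :=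
  ∑ i : QIdx m l, (F i).countP (fun p => decide (p.2 = p.1))

/-- The matrix `N` of Proposition 3.4, with rows and columns indexed by
`{1, …, m} ⊕ {1⁺, …, l⁺}`. -/
def Nmat (n m l : ℕ) (k : Fin l → ℤ) :
    Matrix (Fin m ⊕ Fin l) (Fin m ⊕ Fin l) ℤ :=
  fun i j =>
    match i, j with
    | Sum.inl p, Sum.inl q =>
        ch (2 * (n : ℤ)) ((n : ℤ) + ((q : ℤ) + 1) - ((p : ℤ) + 1))
          + ch (2 * (n : ℤ)) ((n : ℤ) - ((p : ℤ) + 1) - ((q : ℤ) + 1) + 1)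
    | Sum.inl p, Sum.inr t =>
        ch (2 * (n : ℤ) - 2 * k t) ((n : ℤ) - k t - ((p : ℤ) + 1) + 1)
          + ch (2 * (n : ℤ) - 2 * k t) ((n : ℤ) - k t - ((p : ℤ) + 1))
    | Sum.inr t, Sum.inl q =>
        ch (2 * (n : ℤ) - 2 * k t) ((n : ℤ) - k t - ((q : ℤ) + 1) + 1)
          + ch (2 * (n : ℤ) - 2 * k t) ((n : ℤ) - k t - ((q : ℤ) + 1))
    | Sum.inr t, Sum.inr t' =>
        ch (2 * (n : ℤ) - 2 * k t - 2 * k t') ((n : ℤ) - k t - k t')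
          + ch (2 * (n : ℤ) - 2 * k t - 2 * k t') ((n : ℤ) - k t - k t' - 1)

lemma ch_natCast (a b : ℕ) : ch a b = a.choose b := by
  unfold ch
  split_ifs with h
  · simp
  · rw [Nat.choose_eq_zero_of_lt (by omega), Nat.cast_zero]

lemma ch_of_neg {p q : ℤ} (h : q < 0) : ch p q = 0 :=
  if_neg (by omega)

lemma ch_of_lt {p q : ℤ} (h : p < q) : ch p q = 0 :=
  if_neg (by omega)

lemma ch_symm (p q : ℤ) : ch p q = ch p (p - q) := by
  unfold ch
  split_ifs with h h' h'
  · rw [show (p - q).toNat = p.toNat - q.toNat by omega, Nat.choose_symm (by omega)]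
  all_goals first | rfl | omega

lemma ch_zero_right {p : ℤ} (hp : 0 ≤ p) : ch p 0 = 1 := by
  simp [ch, hp]

lemma ch_pascal {p : ℤ} (q : ℤ) (hp : 1 ≤ p) :
    ch p q = ch (p - 1) (q - 1) + ch (p - 1) q := by
  rcases lt_trichotomy q 0 with hq | rfl | hq
  · simp [ch_of_neg, hq, show q - 1 < 0 by omega]
  · rw [ch_zero_right (by omega), ch_zero_right (by omega), ch_of_neg (by omega), zero_add]
  obtain ⟨a, rfl⟩ : ∃ a : ℕ, p = a + 1 := ⟨(p - 1).toNat, by omega⟩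
  obtain ⟨b, rfl⟩ : ∃ b : ℕ, q = b + 1 := ⟨(q - 1).toNat, by omega⟩
  rw [add_sub_cancel_right, add_sub_cancel_right, ← Nat.cast_succ, ← Nat.cast_succ]
  simp only [ch_natCast, Nat.choose_succ_succ, Nat.cast_add]

lemma List.takeWhile_append_cons_of_neg {α : Type*} {p : α → Bool} {A B : List α} {b : α}
    (hA : ∀ a ∈ A, p a) (hb : p b = false) :
    (A ++ b :: B).takeWhile p = A ∧ (A ++ b :: B).dropWhile p = b :: B := by
  simp [List.takeWhile_append_of_pos hA, List.dropWhile_append_of_pos hA, hb]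

section FirstIn

variable {ι : Type*} [Fintype ι]

noncomputable def firstIn (s : Finset ι) (hs : s.Nonempty) : ι :=
  (Fintype.equivFin ι).symm ((s.image (Fintype.equivFin ι)).min' (hs.image _))

lemma firstIn_mem (s : Finset ι) (hs : s.Nonempty) : firstIn s hs ∈ s := by
  obtain ⟨i, hi, he⟩ := Finset.mem_image.mp (Finset.min'_mem _ (hs.image (Fintype.equivFin ι)))
  rwa [firstIn, ← he, Equiv.symm_apply_apply]

lemma firstIn_le {s : Finset ι} (hs : s.Nonempty) {i : ι} (hi : i ∈ s) :
    Fintype.equivFin ι (firstIn s hs) ≤ Fintype.equivFin ι i := by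
  rw [firstIn, Equiv.apply_symm_apply]
  exact Finset.min'_le _ _ (Finset.mem_image_of_mem _ hi)

lemma firstIn_eq_of_subset {s t : Finset ι} (hs : s.Nonempty) (ht : t.Nonempty) (hts : t ⊆ s)
    (h : firstIn s hs ∈ t) : firstIn t ht = firstIn s hs :=
  (Fintype.equivFin ι).injective <|
    le_antisymm (firstIn_le ht h) (firstIn_le hs (hts (firstIn_mem t ht)))

end FirstIn

section TailSwap

variable {α ι : Type*} [DecidableEq α] [Fintype ι] [DecidableEq ι]

def intersectingIdx (F : ι → List α) : Finset ι :=
  Finset.univ.filter fun i => ∃ p ∈ F i, ∃ j, j ≠ i ∧ p ∈ F j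

lemma intersectingIdx_eq_empty_iff {F : ι → List α} :
    intersectingIdx F = ∅ ↔ ∀ i j, i ≠ j → ∀ p ∈ F i, p ∉ F j := by
  simp only [intersectingIdx, Finset.filter_eq_empty_iff, Finset.mem_univ, true_implies]
  grind

namespace TailSwap

variable (F : ι → List α) (h : (intersectingIdx F).Nonempty)

noncomputable def idx₁ : ι := firstIn (intersectingIdx F) h

noncomputable def init₁ : List α :=
  (F (idx₁ F h)).takeWhile fun p => !decide (∃ j, j ≠ idx₁ F h ∧ p ∈ F j)

noncomputable def rest₁ : List α :=
  (F (idx₁ F h)).dropWhile fun p => !decide (∃ j, j ≠ idx₁ F h ∧ p ∈ F j)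

lemma init₁_append_rest₁ : init₁ F h ++ rest₁ F h = F (idx₁ F h) :=
  List.takeWhile_append_dropWhile

lemma rest₁_ne_nil : rest₁ F h ≠ [] := by
  obtain ⟨-, p, hp, j, hj, hpj⟩ := Finset.mem_filter.mp (firstIn_mem _ h)
  simp only [rest₁, ne_eq, List.dropWhile_eq_nil_iff, Bool.not_eq_true', decide_eq_false_iff_not,
    not_exists, not_and, not_forall, not_not]
  exact ⟨p, hp, j, hj, hpj⟩

noncomputable def pt : α := (rest₁ F h).head (rest₁_ne_nil F h)

lemma rest₁_eq_cons : rest₁ F h = pt F h :: (rest₁ F h).tail :=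
  (List.cons_head_tail _).symm

lemma pt_mem_rest₁ : pt F h ∈ rest₁ F h := List.head_mem _

lemma pt_mem_idx₁ : pt F h ∈ F (idx₁ F h) :=
  init₁_append_rest₁ F h ▸ List.mem_append_right _ (pt_mem_rest₁ F h)

lemma not_shared_of_mem_init₁ {p : α} (hp : p ∈ init₁ F h) :
    ¬∃ j, j ≠ idx₁ F h ∧ p ∈ F j := by
  simpa using List.mem_takeWhile_imp hp

noncomputable def partners : Finset ι :=
  Finset.univ.filter fun j => j ≠ idx₁ F h ∧ pt F h ∈ F j

lemma partners_nonempty : (partners F h).Nonempty := by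
  have := List.head_dropWhile_not _ (rest₁_ne_nil F h)
  simp only [Bool.not_eq_false', decide_eq_true_iff] at this
  obtain ⟨j, hj, hpj⟩ := this
  exact ⟨j, Finset.mem_filter.mpr ⟨Finset.mem_univ _, hj, hpj⟩⟩

noncomputable def idx₂ : ι := firstIn (partners F h) (partners_nonempty F h)

lemma idx₂_ne_idx₁ : idx₂ F h ≠ idx₁ F h :=
  (Finset.mem_filter.mp (firstIn_mem _ (partners_nonempty F h))).2.1

lemma pt_mem_idx₂ : pt F h ∈ F (idx₂ F h) :=
  (Finset.mem_filter.mp (firstIn_mem _ (partners_nonempty F h))).2.2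

noncomputable def init₂ : List α := (F (idx₂ F h)).takeWhile fun p => p ≠ pt F h

noncomputable def rest₂ : List α := (F (idx₂ F h)).dropWhile fun p => p ≠ pt F h

lemma init₂_append_rest₂ : init₂ F h ++ rest₂ F h = F (idx₂ F h) :=
  List.takeWhile_append_dropWhile

lemma rest₂_ne_nil : rest₂ F h ≠ [] := by
  simp only [rest₂, ne_eq, List.dropWhile_eq_nil_iff, decide_not, Bool.not_eq_true',
    decide_eq_false_iff_not, not_forall, not_not]
  exact ⟨pt F h, pt_mem_idx₂ F h, rfl⟩

lemma rest₂_eq_cons : rest₂ F h = pt F h :: (rest₂ F h).tail := by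
  have := List.head_dropWhile_not (fun p => decide (p ≠ pt F h)) (rest₂_ne_nil F h)
  simp only [decide_eq_false_iff_not, not_not] at this
  rw [← this]
  exact (List.cons_head_tail _).symm

lemma ne_pt_of_mem_init₂ {p : α} (hp : p ∈ init₂ F h) : p ≠ pt F h := by
  simpa using List.mem_takeWhile_imp hp

end TailSwap

open TailSwap

noncomputable def tailSwap (F : ι → List α) (h : (intersectingIdx F).Nonempty) :
    ι → List α :=
  Function.update (Function.update F (idx₁ F h) (init₁ F h ++ rest₂ F h)) (idx₂ F h)
    (init₂ F h ++ rest₁ F h)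

variable (F : ι → List α) (h : (intersectingIdx F).Nonempty)

lemma tailSwap_idx₁ : tailSwap F h (idx₁ F h) = init₁ F h ++ rest₂ F h := by
  rw [tailSwap, Function.update_of_ne (idx₂_ne_idx₁ F h).symm, Function.update_self]

lemma tailSwap_idx₂ : tailSwap F h (idx₂ F h) = init₂ F h ++ rest₁ F h :=
  Function.update_self ..

lemma tailSwap_of_ne {i : ι} (h₁ : i ≠ idx₁ F h) (h₂ : i ≠ idx₂ F h) :
    tailSwap F h i = F i := by
  rw [tailSwap, Function.update_of_ne h₂, Function.update_of_ne h₁]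

lemma pt_mem_tailSwap_idx₁ : pt F h ∈ tailSwap F h (idx₁ F h) := by
  rw [tailSwap_idx₁, rest₂_eq_cons]
  simp

lemma pt_mem_tailSwap_idx₂ : pt F h ∈ tailSwap F h (idx₂ F h) := by
  rw [tailSwap_idx₂, rest₁_eq_cons]
  simp

lemma mem_of_mem_tailSwap {i : ι} {p : α} (hp : p ∈ tailSwap F h i) :
    p ∈ F i ∨ p ∈ F (idx₁ F h) ∨ p ∈ F (idx₂ F h) := by
  have h₁ := init₁_append_rest₁ F h
  have h₂ := init₂_append_rest₂ F h
  by_cases hi₁ : i = idx₁ F h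
  · rw [hi₁, tailSwap_idx₁] at hp
    grind
  by_cases hi₂ : i = idx₂ F h
  · rw [hi₂, tailSwap_idx₂] at hp
    grind
  rw [tailSwap_of_ne F h hi₁ hi₂] at hp
  exact Or.inl hp

lemma idx₁_mem_intersectingIdx_tailSwap : idx₁ F h ∈ intersectingIdx (tailSwap F h) :=
  Finset.mem_filter.mpr ⟨Finset.mem_univ _, pt F h, pt_mem_tailSwap_idx₁ F h, idx₂ F h,
    idx₂_ne_idx₁ F h, pt_mem_tailSwap_idx₂ F h⟩

lemma intersectingIdx_tailSwap_nonempty : (intersectingIdx (tailSwap F h)).Nonempty :=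
  ⟨_, idx₁_mem_intersectingIdx_tailSwap F h⟩

lemma idx₂_mem_intersectingIdx : idx₂ F h ∈ intersectingIdx F :=
  Finset.mem_filter.mpr ⟨Finset.mem_univ _, pt F h, pt_mem_idx₂ F h, idx₁ F h,
    (idx₂_ne_idx₁ F h).symm, pt_mem_idx₁ F h⟩

lemma intersectingIdx_tailSwap_subset : intersectingIdx (tailSwap F h) ⊆ intersectingIdx F := by
  intro i hi
  by_cases h₁ : i = idx₁ F h
  · exact h₁ ▸ firstIn_mem _ h
  by_cases h₂ : i = idx₂ F h
  · exact h₂ ▸ idx₂_mem_intersectingIdx F h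
  obtain ⟨-, p, hp, j, hj, hpj⟩ := Finset.mem_filter.mp hi
  rw [tailSwap_of_ne F h h₁ h₂] at hp
  refine Finset.mem_filter.mpr ⟨Finset.mem_univ _, p, hp, ?_⟩
  rcases mem_of_mem_tailSwap F h hpj with hpj | hpj | hpj
  exacts [⟨j, hj, hpj⟩, ⟨_, Ne.symm h₁, hpj⟩, ⟨_, Ne.symm h₂, hpj⟩]

variable (h' : (intersectingIdx (tailSwap F h)).Nonempty)

lemma idx₁_tailSwap : idx₁ (tailSwap F h) h' = idx₁ F h :=
  firstIn_eq_of_subset h h' (intersectingIdx_tailSwap_subset F h)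
    (idx₁_mem_intersectingIdx_tailSwap F h)

lemma init₁_tailSwap (hnd : (F (idx₁ F h)).Nodup) :
    init₁ (tailSwap F h) h' = init₁ F h ∧ rest₁ (tailSwap F h) h' = rest₂ F h := by
  unfold init₁ rest₁
  rw [idx₁_tailSwap, tailSwap_idx₁, rest₂_eq_cons]
  refine List.takeWhile_append_cons_of_neg (fun x hx => ?_) ?_
  · simp only [Bool.not_eq_eq_eq_not, Bool.not_true, decide_eq_false_iff_not]
    rintro ⟨j, hj, hxj⟩
    apply not_shared_of_mem_init₁ F h hx
    by_cases hj₂ : j = idx₂ F h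
    · rw [hj₂, tailSwap_idx₂] at hxj
      rcases List.mem_append.mp hxj with hx₂ | hx₁
      · exact ⟨idx₂ F h, idx₂_ne_idx₁ F h,
          init₂_append_rest₂ F h ▸ List.mem_append_left _ hx₂⟩
      · rw [← init₁_append_rest₁ F h] at hnd
        exact (List.disjoint_of_nodup_append hnd hx hx₁).elim
    · exact ⟨j, hj, tailSwap_of_ne F h hj hj₂ ▸ hxj⟩
  · simpa using ⟨idx₂ F h, idx₂_ne_idx₁ F h, pt_mem_tailSwap_idx₂ F h⟩

lemma pt_tailSwap (hnd : (F (idx₁ F h)).Nodup) : pt (tailSwap F h) h' = pt F h := by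
  have h₁ := rest₁_eq_cons (tailSwap F h) h'
  rw [(init₁_tailSwap F h h' hnd).2, rest₂_eq_cons] at h₁
  exact (List.cons.inj h₁).1.symm

lemma partners_tailSwap (hnd : (F (idx₁ F h)).Nodup) :
    partners (tailSwap F h) h' = partners F h := by
  ext j
  simp only [partners, Finset.mem_filter, Finset.mem_univ, true_and, idx₁_tailSwap,
    pt_tailSwap F h h' hnd]
  refine and_congr_right fun hj => ?_
  by_cases hj₂ : j = idx₂ F h
  · rw [hj₂]
    exact iff_of_true (pt_mem_tailSwap_idx₂ F h) (pt_mem_idx₂ F h)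
  · rw [tailSwap_of_ne F h hj hj₂]

lemma idx₂_tailSwap (hnd : (F (idx₁ F h)).Nodup) : idx₂ (tailSwap F h) h' = idx₂ F h := by
  have e := partners_tailSwap F h h' hnd
  exact firstIn_eq_of_subset _ _ e.subset (by rw [e]; exact firstIn_mem _ _)

lemma init₂_tailSwap (hnd : (F (idx₁ F h)).Nodup) :
    init₂ (tailSwap F h) h' = init₂ F h ∧ rest₂ (tailSwap F h) h' = rest₁ F h := by
  unfold init₂ rest₂
  rw [idx₂_tailSwap F h h' hnd, pt_tailSwap F h h' hnd, tailSwap_idx₂, rest₁_eq_cons]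
  exact List.takeWhile_append_cons_of_neg (fun x hx => by simpa using ne_pt_of_mem_init₂ F h hx)
    (by simp)

theorem tailSwap_tailSwap (hnd : (F (idx₁ F h)).Nodup) : tailSwap (tailSwap F h) h' = F := by
  funext i
  by_cases hi₁ : i = idx₁ F h
  · rw [hi₁, ← idx₁_tailSwap F h h', tailSwap_idx₁, (init₁_tailSwap F h h' hnd).1,
      (init₂_tailSwap F h h' hnd).2, init₁_append_rest₁, idx₁_tailSwap]
  by_cases hi₂ : i = idx₂ F h
  · rw [hi₂, ← idx₂_tailSwap F h h' hnd, tailSwap_idx₂, (init₂_tailSwap F h h' hnd).1,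
      (init₁_tailSwap F h h' hnd).2, init₂_append_rest₂, idx₂_tailSwap F h h' hnd]
  rw [tailSwap_of_ne _ _ (idx₁_tailSwap F h h' ▸ hi₁) (idx₂_tailSwap F h h' hnd ▸ hi₂),
    tailSwap_of_ne F h hi₁ hi₂]

end TailSwap

lemma Fintype.prod_eq_prod_of_pair {ι M : Type*} [Fintype ι] [DecidableEq ι] [CommMonoid M]
    {f g : ι → M} {a b : ι} (hab : a ≠ b) (hpair : f a * f b = g a * g b)
    (hfg : ∀ i, i ≠ a → i ≠ b → f i = g i) : ∏ i, f i = ∏ i, g i := by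
  have ha := Finset.mem_univ a
  have hb : b ∈ Finset.univ.erase a := Finset.mem_erase.mpr ⟨hab.symm, Finset.mem_univ b⟩
  rw [← Finset.mul_prod_erase _ f ha, ← Finset.mul_prod_erase _ f hb, ← mul_assoc, hpair,
    ← Finset.mul_prod_erase _ g ha, ← Finset.mul_prod_erase _ g hb, ← mul_assoc]
  refine congrArg _ (Finset.prod_congr rfl fun i hi => ?_)
  obtain ⟨hib, hi⟩ := Finset.mem_erase.mp hi
  exact hfg i (Finset.ne_of_mem_erase hi) hib

def pathWeight {α R : Type*} [Monoid R] (w : α → R) (P : List α) : R := (P.map w).prod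

lemma pathWeight_append {α R : Type*} [Monoid R] (w : α → R) (P Q : List α) :
    pathWeight w (P ++ Q) = pathWeight w P * pathWeight w Q := by
  simp [pathWeight]

section Lindstrom

variable {α ι R : Type*} [DecidableEq α] [Fintype ι] [DecidableEq ι] [CommRing R]

def familyWeight (w : α → R) (F : ι → List α) : R := ∏ i, pathWeight w (F i)

open TailSwap in
lemma familyWeight_tailSwap (w : α → R) (F : ι → List α) (h : (intersectingIdx F).Nonempty) :
    familyWeight w (tailSwap F h) = familyWeight w F := by
  refine Fintype.prod_eq_prod_of_pair (idx₂_ne_idx₁ F h).symm ?_ fun i h₁ h₂ => by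
    rw [tailSwap_of_ne F h h₁ h₂]
  rw [tailSwap_idx₁, tailSwap_idx₂, ← init₁_append_rest₁ F h,
    ← init₂_append_rest₂ F h]
  simp only [pathWeight_append]
  ring

def IsTailSwapClosed (paths : α → α → Finset (List α)) : Prop :=
  ∀ ⦃u v u' v' p : α⦄ ⦃A B C D : List α⦄,
    A ++ B ∈ paths u v → C ++ D ∈ paths u' v' →
    B.head? = some p → D.head? = some p → A ++ D ∈ paths u v'

def families (paths : α → α → Finset (List α)) (st en : ι → α) (σ : Equiv.Perm ι) :
    Finset (ι → List α) :=
  Fintype.piFinset fun i => paths (st i) (en (σ i))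

open TailSwap in
lemma tailSwap_mem_families {paths : α → α → Finset (List α)}
    (hswap : IsTailSwapClosed paths) {st en : ι → α} {σ : Equiv.Perm ι} {F : ι → List α}
    (hF : F ∈ families paths st en σ)
    (h : (intersectingIdx F).Nonempty) :
    tailSwap F h ∈ families paths st en (σ * Equiv.swap (idx₁ F h) (idx₂ F h)) := by
  rw [families, Fintype.mem_piFinset] at hF ⊢
  have hF₁ := init₁_append_rest₁ F h ▸ hF (idx₁ F h)
  have hF₂ := init₂_append_rest₂ F h ▸ hF (idx₂ F h)
  have hp₁ : (rest₁ F h).head? = some (pt F h) := by rw [rest₁_eq_cons]; rfl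
  have hp₂ : (rest₂ F h).head? = some (pt F h) := by rw [rest₂_eq_cons]; rfl
  intro i
  by_cases hi₁ : i = idx₁ F h
  · rw [hi₁, tailSwap_idx₁, Equiv.Perm.mul_apply, Equiv.swap_apply_left]
    exact hswap hF₁ hF₂ hp₁ hp₂
  by_cases hi₂ : i = idx₂ F h
  · rw [hi₂, tailSwap_idx₂, Equiv.Perm.mul_apply, Equiv.swap_apply_right]
    exact hswap hF₂ hF₁ hp₂ hp₁
  rw [tailSwap_of_ne F h hi₁ hi₂, Equiv.Perm.mul_apply,
    Equiv.swap_apply_of_ne_of_ne hi₁ hi₂]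
  exact hF i

open TailSwap in
lemma sum_sign_smul_intersecting_eq_zero (w : α → R) {paths : α → α → Finset (List α)}
    (hnodup : ∀ u v, ∀ P ∈ paths u v, P.Nodup) (hswap : IsTailSwapClosed paths)
    (st en : ι → α) :
    ∑ x ∈ Finset.univ.sigma fun σ =>
        (families paths st en σ).filter (intersectingIdx · ≠ ∅),
      Equiv.Perm.sign x.1 • familyWeight w x.2 = 0 := by
  set s := Finset.univ.sigma fun σ => (families paths st en σ).filter (intersectingIdx · ≠ ∅)
  have hs : ∀ x ∈ s, x.2 ∈ families paths st en x.1 ∧ (intersectingIdx x.2).Nonempty := by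
    intro x hx
    obtain ⟨hF, hne⟩ := Finset.mem_filter.mp (Finset.mem_sigma.mp hx).2
    exact ⟨hF, Finset.nonempty_iff_ne_empty.mpr hne⟩
  have hnd : ∀ x ∈ s, ∀ i, (x.2 i).Nodup := fun x hx i =>
    hnodup _ _ _ (Fintype.mem_piFinset.mp (hs x hx).1 i)
  refine Finset.sum_involution (fun x hx => ⟨x.1 * Equiv.swap (idx₁ x.2 (hs x hx).2)
    (idx₂ x.2 (hs x hx).2), tailSwap x.2 (hs x hx).2⟩) ?_ ?_ ?_ ?_
  · intro x hx
    rw [familyWeight_tailSwap, Equiv.Perm.sign_mul,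
      Equiv.Perm.sign_swap (idx₂_ne_idx₁ _ _).symm, mul_neg_one, Units.neg_smul, add_neg_cancel]
  · intro x hx _ heq
    have hswap1 := mul_eq_left.mp (congrArg Sigma.fst heq)
    exact idx₂_ne_idx₁ _ _ (Equiv.swap_eq_one_iff.mp hswap1).symm
  · intro x hx
    refine Finset.mem_sigma.mpr ⟨Finset.mem_univ _, Finset.mem_filter.mpr ⟨?_, ?_⟩⟩
    · exact tailSwap_mem_families hswap (hs x hx).1 _
    · exact Finset.nonempty_iff_ne_empty.mp (intersectingIdx_tailSwap_nonempty _ _)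
  · intro x hx
    ext
    · simp only [idx₁_tailSwap, idx₂_tailSwap _ _ _ (hnd x hx _), mul_assoc,
        Equiv.swap_mul_self, mul_one]
    · exact heq_of_eq (tailSwap_tailSwap _ _ _ (hnd x hx _))

/-- The Lindström–Gessel–Viennot lemma. -/
theorem det_eq_sum_sign_smul_nonIntersecting (w : α → R) {paths : α → α → Finset (List α)}
    (hnodup : ∀ u v, ∀ P ∈ paths u v, P.Nodup) (hswap : IsTailSwapClosed paths)
    (st en : ι → α) :
    (Matrix.of fun i j => ∑ P ∈ paths (st i) (en j), pathWeight w P).det =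
      ∑ σ : Equiv.Perm ι, Equiv.Perm.sign σ •
        ∑ F ∈ (families paths st en σ).filter (intersectingIdx · = ∅),
          familyWeight w F := by
  rw [← Matrix.det_transpose, Matrix.det_apply]
  simp only [Matrix.transpose_apply, Matrix.of_apply]
  have hsplit : ∀ σ : Equiv.Perm ι, ∏ i, ∑ P ∈ paths (st i) (en (σ i)), pathWeight w P =
      ∑ F ∈ (families paths st en σ).filter (intersectingIdx · ≠ ∅), familyWeight w F +
      ∑ F ∈ (families paths st en σ).filter (intersectingIdx · = ∅), familyWeight w F := by
    intro σ
    rw [add_comm, Finset.sum_filter_add_sum_filter_not, families, Finset.prod_univ_sum]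
    rfl
  have hcancel := sum_sign_smul_intersecting_eq_zero w hnodup hswap st en
  rw [Finset.sum_sigma] at hcancel
  simp only [hsplit, smul_add, Finset.sum_add_distrib, Finset.smul_sum, hcancel, zero_add]

theorem det_eq_sum_nonIntersecting (w : α → R) {paths : α → α → Finset (List α)}
    (hnodup : ∀ u v, ∀ P ∈ paths u v, P.Nodup) (hswap : IsTailSwapClosed paths)
    (st en : ι → α)
    (hid : ∀ σ, ∀ F ∈ families paths st en σ, intersectingIdx F = ∅ → σ = 1) :
    (Matrix.of fun i j => ∑ P ∈ paths (st i) (en j), pathWeight w P).det =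
      ∑ F ∈ (families paths st en 1).filter (intersectingIdx · = ∅), familyWeight w F := by
  rw [det_eq_sum_sign_smul_nonIntersecting w hnodup hswap, Finset.sum_eq_single 1]
  · rw [Equiv.Perm.sign_one, one_smul]
  · intro σ _ hσ
    rw [Finset.filter_eq_empty_iff.mpr fun F hF hI => hσ (hid σ F hF hI), Finset.sum_empty,
      smul_zero]
  · exact fun h => (h (Finset.mem_univ _)).elim

end Lindstrom

section LatticePaths

def level (p : ℤ × ℤ) : ℤ := p.1 + p.2

def lowerPaths (u v : ℤ × ℤ) : Set (List (ℤ × ℤ)) :=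
  {P | IsLP P ∧ P.head? = some u ∧ P.getLast? = some v ∧ ∀ p ∈ P, p.2 ≤ p.1}

variable {P : List (ℤ × ℤ)} {u v : ℤ × ℤ}

lemma isLP_iff :
    IsLP P ↔ P ≠ [] ∧ P.IsChain fun p q => q = (p.1 + 1, p.2) ∨ q = (p.1, p.2 + 1) :=
  Iff.rfl

lemma IsLP.pairwise_lt (hP : IsLP P) : P.Pairwise (· < ·) :=
  List.isChain_iff_pairwise.mp <| hP.2.imp fun p q h => by
    rcases h with rfl | rfl <;> simp [Prod.lt_iff]

lemma IsLP.nodup (hP : IsLP P) : P.Nodup :=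
  hP.pairwise_lt.nodup

lemma IsLP.getD_succ (hP : IsLP P) {i : ℕ} (hi : i + 1 < P.length) :
    P.getD (i + 1) 0 = ((P.getD i 0).1 + 1, (P.getD i 0).2) ∨
      P.getD (i + 1) 0 = ((P.getD i 0).1, (P.getD i 0).2 + 1) := by
  rw [List.getD_eq_getElem _ _ hi, List.getD_eq_getElem _ _ (by omega)]
  exact List.isChain_iff_getElem.mp hP.2 i hi

lemma IsLP.level_getD (hP : IsLP P) {i : ℕ} (hi : i < P.length) :
    level (P.getD i 0) = level (P.getD 0 0) + i := by
  induction i with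
  | zero => simp
  | succ i ih =>
    have ih := ih (by omega)
    rcases hP.getD_succ hi with h | h <;>
    · rw [h]
      simp only [level] at ih ⊢
      push_cast
      linarith

lemma getD_zero_of_head? (h : P.head? = some u) : P.getD 0 0 = u := by
  cases P <;> simp_all

lemma getD_length_sub_one_of_getLast? (h : P.getLast? = some v) :
    P.getD (P.length - 1) 0 = v := by
  have hne : P ≠ [] := by rintro rfl; simp at h
  rw [List.getLast?_eq_some_getLast hne, Option.some_inj] at h
  rw [List.getD_eq_getElem _ _ (by simpa [Nat.pos_iff_ne_zero] using hne), ← h,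
    List.getLast_eq_getElem]

lemma length_of_mem_lowerPaths (hP : P ∈ lowerPaths u v) :
    P.length = (level v - level u).toNat + 1 := by
  obtain ⟨hLP, hu, hv, -⟩ := hP
  have hpos : 0 < P.length := List.length_pos_iff.mpr hLP.1
  have := hLP.level_getD (i := P.length - 1) (by omega)
  rw [getD_length_sub_one_of_getLast? hv, getD_zero_of_head? hu] at this
  omega

lemma le_of_mem_lowerPaths (hP : P ∈ lowerPaths u v) : u ≤ v ∧ u.2 ≤ u.1 := by
  obtain ⟨hLP, hu, hv, hdiag⟩ := hP
  obtain ⟨Q, rfl⟩ : ∃ Q, P = u :: Q := by cases P <;> simp_all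
  refine ⟨?_, hdiag u List.mem_cons_self⟩
  have hvP : v ∈ u :: Q := List.mem_of_getLast? hv
  rcases List.mem_cons.mp hvP with rfl | hvQ
  · exact le_rfl
  · exact (List.rel_of_pairwise_cons hLP.pairwise_lt hvQ).le

lemma lowerPaths_eq_empty (h : ¬(u ≤ v ∧ u.2 ≤ u.1)) : lowerPaths u v = ∅ :=
  Set.eq_empty_of_forall_notMem fun _ hP => h (le_of_mem_lowerPaths hP)

lemma lowerPaths_self (hu : u.2 ≤ u.1) : lowerPaths u u = {[u]} := by
  ext P
  refine ⟨fun hP => ?_, ?_⟩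
  · have hlen := length_of_mem_lowerPaths hP
    rw [sub_self, Int.toNat_zero, zero_add, List.length_eq_one_iff] at hlen
    obtain ⟨a, rfl⟩ := hlen
    simpa using hP.2.1
  · rintro rfl
    exact ⟨⟨by simp, List.isChain_singleton _⟩, rfl, rfl, by simpa using hu⟩

lemma cons_mem_lowerPaths_iff {a : ℤ × ℤ} {Q : List (ℤ × ℤ)} (hQ : Q ≠ []) :
    a :: Q ∈ lowerPaths u v ↔ a = u ∧ u.2 ≤ u.1 ∧ Q ∈ lowerPaths (Q.head hQ) v ∧
      (Q.head hQ = (u.1 + 1, u.2) ∨ Q.head hQ = (u.1, u.2 + 1)) := by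
  obtain ⟨b, Q, rfl⟩ := List.exists_cons_of_ne_nil hQ
  simp only [lowerPaths, isLP_iff, Set.mem_ofPred_eq, List.isChain_cons_cons,
    List.head?_cons, Option.some.injEq, List.getLast?_cons_cons, List.mem_cons, List.head_cons]
  grind

lemma lowerPaths_eq_image (huv : u ≠ v) (hu : u.2 ≤ u.1) :
    lowerPaths u v =
      List.cons u '' (lowerPaths (u.1 + 1, u.2) v ∪ lowerPaths (u.1, u.2 + 1) v) := by
  ext P
  constructor
  · intro hP
    obtain ⟨a, Q, rfl⟩ : ∃ a Q, P = a :: Q := by cases P <;> simp_all [lowerPaths, IsLP]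
    have hQ : Q ≠ [] := by
      rintro rfl
      exact huv (by simpa using hP.2.1.symm.trans hP.2.2.1)
    obtain ⟨rfl, -, hQ', hstep⟩ := (cons_mem_lowerPaths_iff hQ).mp hP
    refine ⟨Q, ?_, rfl⟩
    rcases hstep with h | h <;> rw [h] at hQ' <;> simp [hQ']
  · rintro ⟨Q, hQ, rfl⟩
    have hQne : Q ≠ [] := by rcases hQ with hQ | hQ <;> exact hQ.1.1
    have hhead : ∀ {w}, Q ∈ lowerPaths w v → Q.head hQne = w := fun hw => by
      simpa [List.head?_eq_some_head hQne] using hw.2.1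
    refine (cons_mem_lowerPaths_iff hQne).mpr ⟨rfl, hu, ?_⟩
    rcases hQ with hQ | hQ <;> rw [hhead hQ] <;> simp [hQ]

lemma level_lt_of_le_of_ne (hle : u ≤ v) (huv : u ≠ v) : level u < level v := by
  rw [Prod.le_def] at hle
  by_contra hlt
  exact huv (Prod.ext (by simp only [level] at hlt; omega) (by simp only [level] at hlt; omega))

theorem lowerPaths_finite (u v : ℤ × ℤ) : (lowerPaths u v).Finite := by
  by_cases h : u ≤ v ∧ u.2 ≤ u.1
  · by_cases huv : u = v
    · rw [huv, lowerPaths_self (huv ▸ h.2)]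
      exact Set.finite_singleton _
    · have := level_lt_of_le_of_ne h.1 huv
      rw [lowerPaths_eq_image huv h.2]
      exact ((lowerPaths_finite _ v).union (lowerPaths_finite _ v)).image _
  · rw [lowerPaths_eq_empty h]
    exact Set.finite_empty
termination_by (level v - level u).toNat
decreasing_by all_goals simp only [level] at *; omega

noncomputable def lowerPathFinset (u v : ℤ × ℤ) : Finset (List (ℤ × ℤ)) :=
  (lowerPaths_finite u v).toFinset

lemma mem_lowerPathFinset : P ∈ lowerPathFinset u v ↔ P ∈ lowerPaths u v :=
  Set.Finite.mem_toFinset _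

end LatticePaths

section TouchSum

variable {P : List (ℤ × ℤ)} {u v : ℤ × ℤ}

def touchWeight (p : ℤ × ℤ) : ℤ := if p.2 = p.1 then 2 else 1

lemma pathWeight_touchWeight (P : List (ℤ × ℤ)) :
    pathWeight touchWeight P = 2 ^ P.countP fun p => decide (p.2 = p.1) := by
  induction P with
  | nil => rfl
  | cons a P ih =>
    rw [pathWeight, List.map_cons, List.prod_cons, ← pathWeight, ih, List.countP_cons,
      touchWeight]
    by_cases h : a.2 = a.1 <;> simp [h, pow_succ, mul_comm]

noncomputable def touchSum (u v : ℤ × ℤ) : ℤ :=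
  ∑ P ∈ lowerPathFinset u v, pathWeight touchWeight P

lemma touchSum_of_not_le (h : ¬(u ≤ v ∧ u.2 ≤ u.1)) : touchSum u v = 0 :=
  Finset.sum_eq_zero fun P hP => by
    rw [mem_lowerPathFinset, lowerPaths_eq_empty h] at hP
    exact hP.elim

lemma touchSum_self (hu : u.2 ≤ u.1) : touchSum u u = touchWeight u := by
  have : lowerPathFinset u u = {[u]} := by
    ext P
    rw [mem_lowerPathFinset, lowerPaths_self hu, Finset.mem_singleton, Set.mem_singleton_iff]
  simp [touchSum, this, pathWeight]

lemma touchSum_of_ne (huv : u ≠ v) (hu : u.2 ≤ u.1) :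
    touchSum u v = touchWeight u * (touchSum (u.1 + 1, u.2) v + touchSum (u.1, u.2 + 1) v) := by
  have himage : lowerPathFinset u v = (lowerPathFinset (u.1 + 1, u.2) v ∪
      lowerPathFinset (u.1, u.2 + 1) v).image (List.cons u) := by
    ext P
    simp [mem_lowerPathFinset, lowerPaths_eq_image huv hu]
  have hdisj : Disjoint (lowerPathFinset (u.1 + 1, u.2) v) (lowerPathFinset (u.1, u.2 + 1) v) :=
    Finset.disjoint_left.mpr fun P h₁ h₂ => by
      have := (mem_lowerPathFinset.mp h₁).2.1.symm.trans (mem_lowerPathFinset.mp h₂).2.1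
      simp at this
  rw [touchSum, himage, Finset.sum_image fun _ _ _ _ h => List.cons_injective h,
    Finset.sum_union hdisj, mul_add]
  simp only [touchSum, Finset.mul_sum, pathWeight, List.map_cons, List.prod_cons]

/-- Both sides satisfy Pascal's recursion in `u`; on the diagonal the up-step is forbidden, the
two binomials coincide, and the factor `2` of the touching point makes up for it. -/
theorem touchSum_eq {u v : ℤ × ℤ} (hu : u.2 ≤ u.1) (hv : v.2 ≤ v.1) :
    touchSum u v = ch (level v - level u) (v.1 - u.1) + ch (level v - level u) (v.1 - u.2) := by
  by_cases hle : u ≤ v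
  swap
  · rw [Prod.le_def, not_and_or] at hle
    rw [touchSum_of_not_le (by rw [Prod.le_def]; tauto)]
    simp only [level]
    rcases hle with h | h
    · rw [ch_of_neg (by omega), ch_of_lt (by omega), add_zero]
    · rw [ch_of_lt (by omega), ch_of_lt (by omega), add_zero]
  by_cases huv : u = v
  · subst huv
    rw [touchSum_self hu, sub_self, sub_self, ch_zero_right le_rfl, touchWeight]
    split_ifs with hd
    · rw [hd, sub_self, ch_zero_right le_rfl]; rfl
    · rw [ch_of_lt (by omega)]; rfl
  have hT : 1 ≤ level v - level u := by have := level_lt_of_le_of_ne hle huv; omega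
  rw [touchSum_of_ne huv hu, touchSum_eq (u := (u.1 + 1, u.2)) (by simp only; omega) hv,
    touchWeight, ch_pascal (v.1 - u.1) hT, ch_pascal (v.1 - u.2) hT]
  split_ifs with hd
  · rw [touchSum_of_not_le (u := (u.1, u.2 + 1)) (by simp only; omega)]
    simp only [level, hd]
    ring_nf
  · rw [touchSum_eq (u := (u.1, u.2 + 1)) (by simp only; omega) hv]
    simp only [level]
    ring_nf
termination_by (level v - level u).toNat
decreasing_by all_goals simp only [level] at *; omega

end TouchSum

section Crossing

/-- The point of `P` on the antidiagonal `x + y = h`: levels increase by one along a path. -/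
def pointAt (P : List (ℤ × ℤ)) (h : ℤ) : ℤ × ℤ := P.getD (h - level P.headI).toNat 0

variable {P Q : List (ℤ × ℤ)} {u v u' v' : ℤ × ℤ} {h : ℤ}

lemma headI_of_mem_lowerPaths (hP : P ∈ lowerPaths u v) : P.headI = u := by
  obtain ⟨-, hu, -⟩ := hP
  cases P <;> simp_all

lemma pointAt_mem (hP : P ∈ lowerPaths u v) (hh : h ≤ level v) : pointAt P h ∈ P := by
  have hlen := length_of_mem_lowerPaths hP
  rw [pointAt, headI_of_mem_lowerPaths hP, List.getD_eq_getElem _ _ (by omega)]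
  exact List.getElem_mem _

lemma level_pointAt (hP : P ∈ lowerPaths u v) (h₁ : level u ≤ h) (h₂ : h ≤ level v) :
    level (pointAt P h) = h := by
  have hlen := length_of_mem_lowerPaths hP
  have := hP.1.level_getD (i := (h - level u).toNat) (by omega)
  rw [getD_zero_of_head? hP.2.1] at this
  rw [pointAt, headI_of_mem_lowerPaths hP, this]
  omega

lemma pointAt_eq_start (hP : P ∈ lowerPaths u v) (hh : level u = h) : pointAt P h = u := by
  rw [pointAt, headI_of_mem_lowerPaths hP, hh, sub_self, Int.toNat_zero]
  exact getD_zero_of_head? hP.2.1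

lemma pointAt_eq_end (hP : P ∈ lowerPaths u v) (hh : level v = h) : pointAt P h = v := by
  have hlen := length_of_mem_lowerPaths hP
  rw [pointAt, headI_of_mem_lowerPaths hP, ← hh,
    show (level v - level u).toNat = P.length - 1 by omega]
  exact getD_length_sub_one_of_getLast? hP.2.2.1

lemma pointAt_succ_fst (hP : P ∈ lowerPaths u v) (h₁ : level u ≤ h) (h₂ : h < level v) :
    (pointAt P (h + 1)).1 = (pointAt P h).1 ∨ (pointAt P (h + 1)).1 = (pointAt P h).1 + 1 := by
  have hlen := length_of_mem_lowerPaths hP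
  have hstep := hP.1.getD_succ (i := (h - level u).toNat) (by omega)
  rw [← show (h + 1 - level u).toNat = (h - level u).toNat + 1 by omega] at hstep
  rw [pointAt, pointAt, headI_of_mem_lowerPaths hP]
  rcases hstep with hs | hs <;> rw [hs] <;> simp

lemma le_two_mul_pointAt_fst (hP : P ∈ lowerPaths u v) (h₁ : level u ≤ h)
    (h₂ : h ≤ level v) : h ≤ 2 * (pointAt P h).1 := by
  have hdiag := hP.2.2.2 _ (pointAt_mem hP h₂)
  have hlev := level_pointAt hP h₁ h₂
  simp only [level] at hlev
  omega

lemma Int.exists_eq_zero_of_abs_sub_le_one (f : ℕ → ℤ) (n : ℕ)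
    (hstep : ∀ i < n, |f (i + 1) - f i| ≤ 1) (h₀ : f 0 ≤ 0) (hn : 0 ≤ f n) :
    ∃ i ≤ n, f i = 0 := by
  induction n with
  | zero => exact ⟨0, le_rfl, le_antisymm h₀ hn⟩
  | succ n ih =>
    by_cases hfn : 0 ≤ f n
    · obtain ⟨i, hi, hfi⟩ := ih (fun i hi => hstep i (by omega)) hfn
      exact ⟨i, by omega, hfi⟩
    · have := abs_le.mp (hstep n (by omega))
      exact ⟨n + 1, le_rfl, by omega⟩

/-- Two disjoint paths cannot change their left-to-right order: by the discrete intermediate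
value theorem, the difference of their `x`-coordinates along the antidiagonals would vanish. -/
theorem pointAt_fst_lt_of_disjoint (hP : P ∈ lowerPaths u v) (hQ : Q ∈ lowerPaths u' v')
    (hPQ : ∀ p ∈ P, p ∉ Q) {h₀ h₁ : ℤ} (hh : h₀ ≤ h₁) (hu : level u ≤ h₀)
    (hu' : level u' ≤ h₀) (hv : h₁ ≤ level v) (hv' : h₁ ≤ level v')
    (e₀ : (pointAt P h₀).1 ≤ (pointAt Q h₀).1) :
    (pointAt P h₁).1 < (pointAt Q h₁).1 := by
  by_contra! e₁
  obtain ⟨i, hi, hfi⟩ := Int.exists_eq_zero_of_abs_sub_le_one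
    (fun i => (pointAt P (h₀ + i)).1 - (pointAt Q (h₀ + i)).1) (h₁ - h₀).toNat
    (fun i hi => by
      have hsP := pointAt_succ_fst hP (h := h₀ + i) (by omega) (by omega)
      have hsQ := pointAt_succ_fst hQ (h := h₀ + i) (by omega) (by omega)
      push_cast
      rw [← add_assoc, abs_le]
      constructor <;> omega)
    (by simpa using e₀) (by
      rw [show h₀ + ((h₁ - h₀).toNat : ℤ) = h₁ by omega]
      omega)
  have hP' := level_pointAt hP (h := h₀ + i) (by omega) (by omega)
  have hQ' := level_pointAt hQ (h := h₀ + i) (by omega) (by omega)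
  refine hPQ _ (pointAt_mem hP (h := h₀ + i) (by omega)) ?_
  convert pointAt_mem hQ (h := h₀ + i) (by omega) using 1
  simp only [level] at hP' hQ'
  exact Prod.ext (by omega) (by omega)

end Crossing

lemma Equiv.Perm.exists_inl_eq_inr_of_inr_eq_inl {α β : Type*} [Finite α]
    (σ : Equiv.Perm (α ⊕ β)) {a : α} {b : β} (h : σ (.inr b) = .inl a) :
    ∃ a' b', σ (.inl a') = .inr b' := by
  by_contra! hc
  have hinl : ∀ a', ∃ a'', σ (.inl a') = .inl a'' := fun a' => by
    rcases hσ : σ (.inl a') with a'' | b'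
    exacts [⟨a'', rfl⟩, (hc a' b' hσ).elim]
  choose g hg using hinl
  have hg_inj : Function.Injective g := fun a₁ a₂ h₁₂ =>
    Sum.inl_injective (σ.injective (by rw [hg, hg, h₁₂]))
  obtain ⟨a₀, rfl⟩ := Finite.surjective_of_injective hg_inj a
  exact Sum.inl_ne_inr (σ.injective ((hg a₀).trans h.symm))

section NonIntersecting

variable {n m l : ℕ} {k : Fin l → ℤ}

lemma level_startPt4_inl (s : Fin m) : level (startPt4 m l k (.inl s)) = 1 := by
  simp [level, startPt4]

lemma level_startPt4_inr (t : Fin l) : level (startPt4 m l k (.inr t)) = 2 * k t + 1 := by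
  simp only [level, startPt4]; ring

lemma level_endPt4_inl (s : Fin m) : level (endPt4 n m l k (.inl s)) = 2 * n + 1 := by
  simp only [level, endPt4]; ring

lemma level_endPt4_inr (t : Fin l) : level (endPt4 n m l k (.inr t)) = 2 * n - 2 * k t + 1 := by
  simp only [level, endPt4]; ring

variable {σ : Equiv.Perm (QIdx m l)} {F : QIdx m l → List (ℤ × ℤ)}

/-- A path from some `B` cannot end at some `E s`: then a path from some `A` ends at some `E t`,
and since `B`'s and `E t`'s lie next to the diagonal the two paths would have to cross. -/
lemma perm_inr_ne_inl (hkpos : ∀ t, 0 < k t) (hkbd : ∀ t, 2 * k t ≤ (n : ℤ))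
    (hF : ∀ i, F i ∈ lowerPaths (startPt4 m l k i) (endPt4 n m l k (σ i)))
    (hNI : ∀ i j, i ≠ j → ∀ p ∈ F i, p ∉ F j) (t : Fin l) (q : Fin m) :
    σ (.inr t) ≠ .inl q := by
  intro hσt
  obtain ⟨s, t', hσs⟩ := σ.exists_inl_eq_inr_of_inr_eq_inl hσt
  have hB := hF (.inr t)
  have hA := hF (.inl s)
  rw [hσt] at hB
  rw [hσs] at hA
  have := hkpos t; have := hkpos t'; have := hkbd t; have := hkbd t'
  have e₀ :
      (pointAt (F (.inr t)) (2 * k t + 1)).1 ≤ (pointAt (F (.inl s)) (2 * k t + 1)).1 := by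
    have hleft := le_two_mul_pointAt_fst hA (h := 2 * k t + 1)
      (by rw [level_startPt4_inl]; omega) (by rw [level_endPt4_inr]; omega)
    rw [pointAt_eq_start hB (level_startPt4_inr t)]
    simp only [startPt4]
    omega
  have hlt := pointAt_fst_lt_of_disjoint hB hA (hNI _ _ Sum.inr_ne_inl)
    (h₁ := 2 * n - 2 * k t' + 1)
    (by omega) (by rw [level_startPt4_inr]) (by rw [level_startPt4_inl]; omega)
    (by rw [level_endPt4_inl]; omega) (by rw [level_endPt4_inr]) e₀
  have hleft := le_two_mul_pointAt_fst hB (h := 2 * n - 2 * k t' + 1)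
    (by rw [level_startPt4_inr]; omega) (by rw [level_endPt4_inl]; omega)
  rw [pointAt_eq_end hA (level_endPt4_inr t')] at hlt
  simp only [endPt4] at hlt
  omega

lemma perm_inl_lt (hF : ∀ i, F i ∈ lowerPaths (startPt4 m l k i) (endPt4 n m l k (σ i)))
    (hNI : ∀ i j, i ≠ j → ∀ p ∈ F i, p ∉ F j) {s s' a a' : Fin m} (hss' : s < s')
    (ha : σ (.inl s) = .inl a) (ha' : σ (.inl s') = .inl a') : a < a' := by
  have hA := hF (.inl s)
  have hA' := hF (.inl s')
  rw [ha] at hA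
  rw [ha'] at hA'
  have hlt := pointAt_fst_lt_of_disjoint hA hA' (hNI _ _ (by simpa using hss'.ne)) (h₀ := 1)
    (h₁ := 2 * n + 1) (by omega) (by rw [level_startPt4_inl]) (by rw [level_startPt4_inl])
    (by rw [level_endPt4_inl]) (by rw [level_endPt4_inl]) (by
      rw [pointAt_eq_start hA (level_startPt4_inl s), pointAt_eq_start hA' (level_startPt4_inl s')]
      simp only [startPt4]
      have : (s : ℤ) < s' := by exact_mod_cast hss'
      omega)
  rw [pointAt_eq_end hA (level_endPt4_inl a), pointAt_eq_end hA' (level_endPt4_inl a')] at hlt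
  simp only [endPt4] at hlt
  exact_mod_cast (by omega : (a : ℤ) < a')

/-- The path from `B t'` starts next to the diagonal, so it runs to the left of the path from
`B t` and must end first. -/
lemma perm_inr_lt (hkmono : StrictMono k) (hkbd : ∀ t, 2 * k t ≤ (n : ℤ))
    (hF : ∀ i, F i ∈ lowerPaths (startPt4 m l k i) (endPt4 n m l k (σ i)))
    (hNI : ∀ i j, i ≠ j → ∀ p ∈ F i, p ∉ F j) {t t' b b' : Fin l} (htt' : t < t')
    (hb : σ (.inr t) = .inr b) (hb' : σ (.inr t') = .inr b') : b < b' := by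
  have hB := hF (.inr t)
  have hB' := hF (.inr t')
  rw [hb] at hB
  rw [hb'] at hB'
  have hne : b ≠ b' := by
    rintro rfl
    exact htt'.ne (Sum.inr_injective (σ.injective (hb.trans hb'.symm)))
  by_contra! hle
  have hkt := hkmono htt'
  have hkb := hkmono (lt_of_le_of_ne hle hne.symm)
  have := hkbd t'; have := hkbd b
  have e₀ :
      (pointAt (F (.inr t')) (2 * k t' + 1)).1 ≤ (pointAt (F (.inr t)) (2 * k t' + 1)).1 := by
    have hleft := le_two_mul_pointAt_fst hB (h := 2 * k t' + 1)
      (by rw [level_startPt4_inr]; omega) (by rw [level_endPt4_inr]; omega)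
    rw [pointAt_eq_start hB' (level_startPt4_inr t')]
    simp only [startPt4]
    omega
  have hlt := pointAt_fst_lt_of_disjoint hB' hB (hNI _ _ (by simpa using htt'.ne'))
    (h₁ := 2 * n - 2 * k b + 1) (by omega) (by rw [level_startPt4_inr])
    (by rw [level_startPt4_inr]; omega) (by rw [level_endPt4_inr]; omega)
    (by rw [level_endPt4_inr]) e₀
  have hleft := le_two_mul_pointAt_fst hB' (h := 2 * n - 2 * k b + 1)
    (by rw [level_startPt4_inr]; omega) (by rw [level_endPt4_inr]; omega)
  rw [pointAt_eq_end hB (level_endPt4_inr b)] at hlt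
  simp only [endPt4] at hlt
  omega

theorem perm_eq_one_of_nonIntersecting (hkpos : ∀ t, 0 < k t) (hkmono : StrictMono k)
    (hkbd : ∀ t, 2 * k t ≤ (n : ℤ))
    (hF : ∀ i, F i ∈ lowerPaths (startPt4 m l k i) (endPt4 n m l k (σ i)))
    (hNI : ∀ i j, i ≠ j → ∀ p ∈ F i, p ∉ F j) : σ = 1 := by
  have hinr : ∀ t, ∃ b, σ (.inr t) = .inr b := fun t => by
    rcases hσ : σ (.inr t) with q | b
    exacts [(perm_inr_ne_inl hkpos hkbd hF hNI t q hσ).elim, ⟨b, rfl⟩]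
  have hinl : ∀ s, ∃ a, σ (.inl s) = .inl a := fun s => by
    rcases hσ : σ (.inl s) with a | b
    · exact ⟨a, rfl⟩
    · obtain ⟨a', b', h⟩ :=
        σ⁻¹.exists_inl_eq_inr_of_inr_eq_inl (by rw [Equiv.Perm.inv_eq_iff_eq, hσ])
      exact (perm_inr_ne_inl hkpos hkbd hF hNI b' a' (Equiv.Perm.inv_eq_iff_eq.mp h).symm).elim
  choose π hπ using hinl
  choose τ hτ using hinr
  have hπ_mono : StrictMono π := fun s s' h => perm_inl_lt hF hNI h (hπ s) (hπ s')
  have hτ_mono : StrictMono τ := fun t t' h => perm_inr_lt hkmono hkbd hF hNI h (hτ t) (hτ t')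
  ext (s | t) : 1
  · rw [hπ, hπ_mono.apply_eq]; rfl
  · rw [hτ, hτ_mono.apply_eq]; rfl

end NonIntersecting

lemma isTailSwapClosed_lowerPathFinset : IsTailSwapClosed lowerPathFinset := by
  intro u v u' v' p A B C D h₁ h₂ hB hD
  rw [mem_lowerPathFinset] at h₁ h₂ ⊢
  obtain ⟨⟨-, hc₁⟩, hu, -, hd₁⟩ := h₁
  obtain ⟨⟨-, hc₂⟩, -, hv, hd₂⟩ := h₂
  have hDne : D ≠ [] := by rintro rfl; simp at hD
  obtain ⟨hcA, -, hjoin⟩ := List.isChain_append.mp hc₁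
  obtain ⟨-, hcD, -⟩ := List.isChain_append.mp hc₂
  refine ⟨⟨by simp [hDne], List.isChain_append.mpr ⟨hcA, hcD, ?_⟩⟩, ?_, ?_, ?_⟩
  · rwa [hD, ← hB]
  · rwa [List.head?_append, hD, ← hB, ← List.head?_append]
  · rwa [List.getLast?_append, List.getLast?_eq_some_getLast hDne] at hv ⊢
  · intro q hq
    rcases List.mem_append.mp hq with hq | hq
    exacts [hd₁ q (List.mem_append_left _ hq), hd₂ q (List.mem_append_right _ hq)]

lemma touchSum_startPt4_endPt4 (n m l : ℕ) (k : Fin l → ℤ) (i j : QIdx m l) :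
    touchSum (startPt4 m l k i) (endPt4 n m l k j) = Nmat n m l k i j := by
  rcases i with s | t <;> rcases j with q | t' <;>
    rw [touchSum_eq (by simp only [startPt4]; omega) (by simp only [endPt4]; omega)] <;>
    simp only [Nmat, level, startPt4, endPt4]
  all_goals congr 1 <;> first | (congr 1 <;> ring1) | (rw [ch_symm]; congr 1 <;> ring1)

lemma fam4_eq_families (n m l : ℕ) (k : Fin l → ℤ) :
    Fam4 n m l k = ((families lowerPathFinset (startPt4 m l k) (endPt4 n m l k) 1).filter
      (intersectingIdx · = ∅) : Set (QIdx m l → List (ℤ × ℤ))) := by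
  ext F
  simp [Fam4, families, Fintype.mem_piFinset, mem_lowerPathFinset, lowerPaths,
    intersectingIdx_eq_empty_iff]

lemma two_pow_touchCount {m l : ℕ} (F : QIdx m l → List (ℤ × ℤ)) :
    (2 : ℤ) ^ touchCount F = familyWeight touchWeight F := by
  simp only [touchCount, familyWeight, pathWeight_touchWeight, Finset.prod_pow_eq_pow_sum]

theorem weighted_path_count_eq_determinant_general
    (n m l : ℕ)
    (k : Fin l → ℤ) (hkpos : ∀ t, 0 < k t) (hkmono : StrictMono k)
    (hkbd : ∀ t, 2 * k t ≤ (n : ℤ)) :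
    ∑ᶠ F : (Fam4 n m l k), (2 : ℤ) ^ touchCount F.1 = (Nmat n m l k).det := by
  have hN : Nmat n m l k = Matrix.of fun i j =>
      ∑ P ∈ lowerPathFinset (startPt4 m l k i) (endPt4 n m l k j), pathWeight touchWeight P :=
    Matrix.ext fun i j => (touchSum_startPt4_endPt4 n m l k i j).symm
  have hnodup : ∀ u v, ∀ P ∈ lowerPathFinset u v, P.Nodup := fun _ _ _ hP =>
    (mem_lowerPathFinset.mp hP).1.nodup
  have hid : ∀ σ, ∀ F ∈ families lowerPathFinset (startPt4 m l k) (endPt4 n m l k) σ,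
      intersectingIdx F = ∅ → σ = 1 := fun σ F hF hI =>
    perm_eq_one_of_nonIntersecting hkpos hkmono hkbd
      (fun i => mem_lowerPathFinset.mp (Fintype.mem_piFinset.mp hF i))
      (intersectingIdx_eq_empty_iff.mp hI)
  rw [hN, det_eq_sum_nonIntersecting touchWeight hnodup isTailSwapClosed_lowerPathFinset _ _ hid,
    finsum_set_coe_eq_finsum_mem (f := fun F => (2 : ℤ) ^ touchCount F), fam4_eq_families,
    finsum_mem_coe_finset]
  exact Finset.sum_congr rfl fun F _ => two_pow_touchCount F

/-- **Proposition 3.4**: the generating function, with weight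
`2^(number of touchings of the main diagonal)`, of the families of non-intersecting
lattice paths from the `A`'s and `B`'s to the `E`'s staying weakly below the main
diagonal `x = y`, is given by `det N`. -/
theorem weighted_path_count_eq_determinant
    (n m l : ℕ) (hn : 0 < n) (hm : 0 < m) (hl : 0 < l)
    (k : Fin l → ℤ) (hkpos : ∀ t, 0 < k t) (hkmono : StrictMono k)
    (hkbd : ∀ t, 2 * k t ≤ (n : ℤ)) :
    ∑ᶠ F : (Fam4 n m l k), (2 : ℤ) ^ touchCount F.1 = (Nmat n m l k).det :=
  weighted_path_count_eq_determinant_general n m l k hkpos hkmono hkbd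
end

section
/- Let a, b, c, d be integers with a > b and c > d. The sum of 2^{T(P)} over all lattice paths P from (a,b) to (c,d) that never cross above the main diagonal x = y, where T(P) is the number of touching points of P with the main diagonal, equals C(c+d−a−b, c−a) + C(c+d−a−b, d−a). -/
lemma ch_eq_zero {n k : ℤ} (h : ¬(0 ≤ k ∧ k ≤ n)) : ch n k = 0 := if_neg h

lemma ch_natCast_s9 (m j : ℕ) : ch m j = m.choose j := by
  unfold ch
  split_ifs with h
  · simp
  · rw [Nat.choose_eq_zero_of_lt (by omega), Nat.cast_zero]

lemma ch_sub_right (n k : ℤ) : ch n (n - k) = ch n k := by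
  by_cases hk : 0 ≤ k ∧ k ≤ n
  · obtain ⟨j, rfl⟩ := Int.eq_ofNat_of_zero_le hk.1
    obtain ⟨m, rfl⟩ := Int.eq_ofNat_of_zero_le (hk.1.trans hk.2)
    have hjm : j ≤ m := by omega
    rw [← Nat.cast_sub hjm, ch_natCast_s9, ch_natCast_s9, Nat.choose_symm hjm]
  · rw [ch_eq_zero hk, ch_eq_zero (by omega)]

lemma ch_succ {n : ℤ} (hn : 0 ≤ n) (k : ℤ) : ch (n + 1) k = ch n k + ch n (k - 1) := by
  obtain ⟨m, rfl⟩ := Int.eq_ofNat_of_zero_le hn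
  rcases lt_trichotomy k 0 with hk | rfl | hk
  · rw [ch_eq_zero (by omega), ch_eq_zero (by omega), ch_eq_zero (by omega), add_zero]
  · rw [ch_eq_zero (k := 0 - 1) (by omega), add_zero, ← Nat.cast_zero, ← Nat.cast_succ,
      ch_natCast_s9, ch_natCast_s9, Nat.choose_zero_right, Nat.choose_zero_right]
  · obtain ⟨j, rfl⟩ : ∃ j : ℕ, k = j + 1 := ⟨(k - 1).toNat, by omega⟩
    have h := ch_natCast_s9 (m + 1) (j + 1)
    have h' := ch_natCast_s9 m (j + 1)
    push_cast at h h'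
    rw [add_sub_cancel_right, h, h', ch_natCast_s9, Nat.choose_succ_succ']
    push_cast
    ring

def latticePathCount (p q : ℤ × ℤ) : ℤ := ch (q.1 + q.2 - p.1 - p.2) (q.1 - p.1)

lemma latticePathCount_swap (p q : ℤ × ℤ) :
    latticePathCount p.swap q.swap = latticePathCount p q := by
  rw [latticePathCount, latticePathCount, ← ch_sub_right]
  congr 1 <;> simp only [Prod.fst_swap, Prod.snd_swap] <;> ring

lemma latticePathCount_self (q : ℤ × ℤ) : latticePathCount q q = 1 := by
  simp [latticePathCount, ch]

lemma latticePathCount_eq_zero {p q : ℤ × ℤ} (hne : p ≠ q) (h : q.1 + q.2 ≤ p.1 + p.2) :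
    latticePathCount p q = 0 := by
  refine ch_eq_zero fun hk => hne (Prod.ext ?_ ?_) <;> omega

lemma latticePathCount_eq_add {p q : ℤ × ℤ} (h : p.1 + p.2 < q.1 + q.2) :
    latticePathCount p q
      = latticePathCount (p.1 + 1, p.2) q + latticePathCount (p.1, p.2 + 1) q := by
  obtain ⟨x, y⟩ := p
  obtain ⟨c, d⟩ := q
  dsimp only at h
  simp only [latticePathCount]
  rw [show c + d - x - y = c + d - (x + 1) - y + 1 by ring, ch_succ (by omega),
    show c + d - x - (y + 1) = c + d - (x + 1) - y by ring, show c - (x + 1) = c - x - 1 by ring,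
    add_comm]

lemma latticePathCount_diag_add_swap (x : ℤ) {q : ℤ × ℤ} (h : x + x < q.1 + q.2) :
    latticePathCount (x, x) q + latticePathCount (x, x) q.swap
      = 2 * (latticePathCount (x + 1, x) q + latticePathCount (x + 1, x) q.swap) := by
  obtain ⟨c, d⟩ := q
  dsimp only at h
  simp only [Prod.swap_prod_mk]
  rw [latticePathCount_eq_add h, latticePathCount_eq_add (q := (d, c)) (by dsimp only; omega)]
  dsimp only
  rw [← latticePathCount_swap (x, x + 1) (c, d), ← latticePathCount_swap (x, x + 1) (d, c)]
  simp only [Prod.swap_prod_mk]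
  ring

lemma isLP_cons_cons {p r : ℤ × ℤ} {t : List (ℤ × ℤ)} :
    IsLP (p :: r :: t) ↔ (r = (p.1 + 1, p.2) ∨ r = (p.1, p.2 + 1)) ∧ IsLP (r :: t) := by
  change _ ∧ List.IsChain _ _ ↔ _ ∧ _ ∧ List.IsChain _ _
  simp [List.isChain_cons_cons]

lemma IsLP.length_eq {L : List (ℤ × ℤ)} (hL : IsLP L) {p q : ℤ × ℤ} (hp : L.head? = some p)
    (hq : L.getLast? = some q) : q.1 + q.2 + 1 = p.1 + p.2 + L.length := by
  induction L generalizing p with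
  | nil => simp at hp
  | cons a t ih =>
    obtain rfl : a = p := by simpa using hp
    cases t with
    | nil =>
      obtain rfl : a = q := by simpa using hq
      simp
    | cons r t =>
      obtain ⟨hr, ht⟩ := isLP_cons_cons.1 hL
      have := ih ht rfl (by rwa [List.getLast?_cons_cons] at hq)
      rcases hr with rfl | rfl <;> simp only [List.length_cons] at this ⊢ <;> push_cast at this ⊢ <;>
        omega

def subdiagPaths (p q : ℤ × ℤ) : Set (List (ℤ × ℤ)) :=
  {L | IsLP L ∧ L.head? = some p ∧ L.getLast? = some q ∧ ∀ r ∈ L, r.2 ≤ r.1}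

lemma cons_cons_mem_subdiagPaths_iff {p r q : ℤ × ℤ} {t : List (ℤ × ℤ)} :
    p :: r :: t ∈ subdiagPaths p q ↔
      p.2 ≤ p.1 ∧ (r = (p.1 + 1, p.2) ∨ r = (p.1, p.2 + 1)) ∧ r :: t ∈ subdiagPaths r q := by
  simp only [subdiagPaths, Set.mem_ofPred_eq, isLP_cons_cons, List.getLast?_cons_cons,
    List.head?_cons, List.forall_mem_cons]
  tauto

lemma subdiagPaths_eq_empty_of_lt {p q : ℤ × ℤ} (h : p.1 < p.2) : subdiagPaths p q = ∅ :=
  Set.eq_empty_of_forall_notMem fun _ ⟨_, hp, _, hL⟩ =>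
    (hL p (List.mem_of_mem_head? hp)).not_gt h

lemma eq_singleton_of_mem_subdiagPaths {p q : ℤ × ℤ} {L : List (ℤ × ℤ)}
    (hL : L ∈ subdiagPaths p q) (h : q.1 + q.2 ≤ p.1 + p.2) : L = [p] ∧ p = q := by
  obtain ⟨hLP, hp, hq, -⟩ := hL
  have hlen := hLP.length_eq hp hq
  obtain ⟨a, rfl⟩ := List.length_eq_one_iff.1
    (show L.length = 1 by have := List.length_pos_iff.2 hLP.1; omega)
  obtain rfl : a = p := by simpa using hp
  exact ⟨rfl, by simpa using hq⟩

lemma subdiagPaths_self {q : ℤ × ℤ} (hq : q.2 ≤ q.1) : subdiagPaths q q = {[q]} := by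
  refine Set.Subset.antisymm (fun L hL => (eq_singleton_of_mem_subdiagPaths hL le_rfl).1) ?_
  rintro _ rfl
  exact ⟨⟨List.cons_ne_nil _ _, List.isChain_singleton _⟩, rfl, rfl, by simpa using hq⟩

lemma subdiagPaths_eq_empty {p q : ℤ × ℤ} (hne : p ≠ q) (h : q.1 + q.2 ≤ p.1 + p.2) :
    subdiagPaths p q = ∅ :=
  Set.eq_empty_of_forall_notMem fun _ hL => hne (eq_singleton_of_mem_subdiagPaths hL h).2

lemma subdiagPaths_eq_image {p q : ℤ × ℤ} (hne : p ≠ q) (hp : p.2 ≤ p.1) :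
    subdiagPaths p q =
      (p :: ·) '' (subdiagPaths (p.1 + 1, p.2) q ∪ subdiagPaths (p.1, p.2 + 1) q) := by
  ext L
  constructor
  · intro hL
    obtain ⟨a, t, rfl⟩ := List.exists_cons_of_ne_nil hL.1.1
    obtain rfl : a = p := by simpa using hL.2.1
    obtain ⟨r, t, rfl⟩ := List.exists_cons_of_ne_nil fun ht : t = [] =>
      hne (by simpa [ht] using hL.2.2.1)
    obtain ⟨-, hr, ht⟩ := cons_cons_mem_subdiagPaths_iff.1 hL
    refine ⟨r :: t, ?_, rfl⟩
    rcases hr with rfl | rfl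
    exacts [Or.inl ht, Or.inr ht]
  · rintro ⟨t, ht, rfl⟩
    rcases ht with ht | ht <;>
    · obtain ⟨r, t, rfl⟩ := List.exists_cons_of_ne_nil ht.1.1
      obtain rfl : r = _ := by simpa using ht.2.1
      exact cons_cons_mem_subdiagPaths_iff.2 ⟨hp, by simp, ht⟩

lemma disjoint_subdiagPaths {p p' q : ℤ × ℤ} (h : p ≠ p') :
    Disjoint (subdiagPaths p q) (subdiagPaths p' q) :=
  Set.disjoint_left.2 fun _ ⟨_, hp, _⟩ ⟨_, hp', _⟩ =>
    h (Option.some_injective _ (hp.symm.trans hp'))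

lemma subdiagPaths_finite (p q : ℤ × ℤ) : (subdiagPaths p q).Finite := by
  by_cases hp : p.1 < p.2
  · simp [subdiagPaths_eq_empty_of_lt hp]
  by_cases hpq : p = q
  · simp [hpq, subdiagPaths_self (not_lt.1 (hpq ▸ hp))]
  by_cases hlen : q.1 + q.2 ≤ p.1 + p.2
  · simp [subdiagPaths_eq_empty hpq hlen]
  rw [subdiagPaths_eq_image hpq (not_lt.1 hp)]
  exact ((subdiagPaths_finite _ q).union (subdiagPaths_finite _ q)).image _
termination_by (q.1 + q.2 - p.1 - p.2).toNat

def diagWeight (L : List (ℤ × ℤ)) : ℤ := 2 ^ L.countP (fun p => decide (p.2 = p.1))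

lemma diagWeight_cons (p : ℤ × ℤ) (t : List (ℤ × ℤ)) :
    diagWeight (p :: t) = (if p.2 = p.1 then 2 else 1) * diagWeight t := by
  by_cases h : p.2 = p.1 <;> simp [diagWeight, h, pow_succ, mul_comm]

theorem finsum_diagWeight_subdiagPaths {q : ℤ × ℤ} (hq : q.2 < q.1) {x y : ℤ} (hyx : y ≤ x) :
    ∑ᶠ L ∈ subdiagPaths (x, y) q, diagWeight L
      = latticePathCount (x, y) q + latticePathCount (x, y) q.swap := by
  by_cases hpq : (x, y) = q
  · subst hpq
    rw [subdiagPaths_self hyx, finsum_mem_singleton, latticePathCount_self,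
      latticePathCount_eq_zero (fun h => hq.ne' (congrArg Prod.fst h)) (by simp [add_comm])]
    simp [diagWeight, hq.ne]
  by_cases hlen : q.1 + q.2 ≤ x + y
  · have hne : (x, y) ≠ q.swap := fun h => by
      simp only [Prod.ext_iff, Prod.fst_swap, Prod.snd_swap] at h
      omega
    rw [subdiagPaths_eq_empty hpq hlen, finsum_mem_empty, latticePathCount_eq_zero hpq hlen,
      latticePathCount_eq_zero hne (by simpa [add_comm] using hlen), add_zero]
  rw [subdiagPaths_eq_image hpq hyx, finsum_mem_image List.cons_injective.injOn]
  dsimp only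
  rcases hyx.lt_or_eq with hlt | rfl
  · rw [finsum_mem_union (disjoint_subdiagPaths (by simp)) (subdiagPaths_finite _ _)
      (subdiagPaths_finite _ _)]
    simp only [diagWeight_cons, if_neg hlt.ne, one_mul]
    rw [finsum_diagWeight_subdiagPaths hq (by omega), finsum_diagWeight_subdiagPaths hq (by omega),
      latticePathCount_eq_add (p := (x, y)) (by dsimp only; omega),
      latticePathCount_eq_add (p := (x, y)) (q := q.swap)
        (by dsimp only [Prod.fst_swap, Prod.snd_swap]; omega)]
    ring
  · rw [subdiagPaths_eq_empty_of_lt (p := (y, y + 1)) (lt_add_one y), Set.union_empty]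
    simp only [diagWeight_cons, if_true, ← mul_finsum_mem]
    rw [finsum_diagWeight_subdiagPaths hq (by omega), latticePathCount_diag_add_swap y (by omega)]
termination_by (q.1 + q.2 - x - y).toNat

/-- The reflection argument in the proof of Proposition 3.4: for integers `a > b` and
`c > d`, the sum of `2^(number of touchings of the main diagonal)` over all lattice
paths from `(a, b)` to `(c, d)` staying weakly below the main diagonal `x = y` equals
`C(c+d-a-b, c-a) + C(c+d-a-b, d-a)`. -/
theorem subdiagonal_weighted_path_count (a b c d : ℤ) (hab : b < a) (hcd : d < c) :
    ∑ᶠ P : {L : List (ℤ × ℤ) // IsLP L ∧ L.head? = some (a, b) ∧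
        L.getLast? = some (c, d) ∧ ∀ p ∈ L, p.2 ≤ p.1},
      (2 : ℤ) ^ (P.1.countP (fun p => decide (p.2 = p.1)))
    = ch (c + d - a - b) (c - a) + ch (c + d - a - b) (d - a) := by
  have h := finsum_diagWeight_subdiagPaths (q := (c, d)) hcd hab.le
  dsimp only [latticePathCount, Prod.swap_prod_mk] at h
  rw [add_comm d c] at h
  exact (finsum_set_coe_eq_finsum_mem _).trans h
end

section
/- Let n, m be positive integers and i, j integers with −m+1 ≤ i < j ≤ m. Then Σ_{−m+1 ≤ u < v ≤ n+m} ( C(n, u−i) C(n, v−j) − C(n, u−j) C(n, v−i) ) = Σ_{r=i−j+1}^{j−i} C(2n, n+r). -/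
/-!
Swapping `u` and `v` in the subtracted term turns the sum of `2 × 2` minors over `u < v` into
`Σ_{u,v} sign (v - u) C(n, u - i) C(n, v - j)`. Putting `v - u = r + (j - i)` and summing out
the remaining variable by Chu–Vandermonde leaves `Σ_r sign (r + j - i) C(2n, n + r)`. As
`C(2n, n + r)` is even in `r`, the terms with `r > j - i` cancel those with `r < i - j`.
-/

open Finset

theorem sum_Icc_comp_sub_right {M : Type*} [AddCommMonoid M] (f : ℤ → M) (a b c : ℤ) :
    ∑ x ∈ Icc a b, f (x - c) = ∑ x ∈ Icc (a - c) (b - c), f x := by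
  simp only [sub_eq_add_neg]
  rw [← map_add_right_Icc, sum_map]
  rfl

theorem ch_eq_zero_s10 {p q : ℤ} (h : q ∉ Icc 0 p) : ch p q = 0 := by
  rw [ch, if_neg (by simpa using h)]

theorem ch_natCast_s10 (p k : ℕ) : ch p k = p.choose k := by
  unfold ch
  split_ifs with h
  · simp
  · rw [Nat.choose_eq_zero_of_lt (by omega), Nat.cast_zero]

theorem ch_succ_s10 (p : ℕ) (s : ℤ) : ch ((p : ℤ) + 1) s = ch p s + ch p (s - 1) := by
  rcases lt_or_ge s 0 with hs | hs
  · rw [ch_eq_zero_s10 (by rw [mem_Icc]; omega), ch_eq_zero_s10 (by rw [mem_Icc]; omega),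
      ch_eq_zero_s10 (by rw [mem_Icc]; omega), add_zero]
  obtain ⟨k, rfl⟩ := Int.eq_ofNat_of_zero_le hs
  cases k with
  | zero =>
    rw [ch_eq_zero_s10 (q := ((0 : ℕ) : ℤ) - 1) (by simp), ← Nat.cast_succ, ch_natCast_s10, ch_natCast_s10]
    simp
  | succ k =>
    rw [Nat.cast_succ k, add_sub_cancel_right, ← Nat.cast_succ, ← Nat.cast_succ, ch_natCast_s10,
      ch_natCast_s10, ch_natCast_s10, Nat.choose_succ_succ', Nat.cast_add, add_comm]

theorem ch_sub (p s : ℤ) : ch p (p - s) = ch p s := by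
  unfold ch
  split_ifs with h₁ h₂ h₂ <;> try omega
  rw [show (p - s).toNat = p.toNat - s.toNat by omega, Nat.choose_symm (by omega)]

theorem sum_Icc_ch_mul_ch_sub (p q : ℕ) {a b : ℤ} (ha : a ≤ 0) (hb : p ≤ b) (c : ℤ) :
    ∑ s ∈ Icc a b, ch p s * ch q (c - s) = ch ((p : ℤ) + q) c := by
  induction p generalizing a b c with
  | zero =>
    rw [sum_eq_single 0 (fun s _ hs => by rw [ch_eq_zero_s10 (by simpa using hs), zero_mul])
      (fun h => absurd (mem_Icc.2 ⟨ha, hb⟩) h)]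
    simp [ch]
  | succ p ih =>
    have shifted : ∑ s ∈ Icc a b, ch p (s - 1) * ch q (c - s)
        = ∑ s ∈ Icc (a - 1) (b - 1), ch p s * ch q (c - 1 - s) := by
      rw [← sum_Icc_comp_sub_right]
      simp only [sub_sub_sub_cancel_right]
    push_cast at hb ⊢
    simp only [ch_succ_s10, add_mul, sum_add_distrib, shifted]
    rw [ih ha (by omega), ih (by omega) (by omega), add_right_comm, ← Nat.cast_add, ch_succ_s10,
      Nat.cast_add]

theorem sum_Icc_ch_mul_ch_add (n : ℕ) {a b : ℤ} (ha : a ≤ 0) (hb : n ≤ b) (r : ℤ) :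
    ∑ s ∈ Icc a b, ch n s * ch n (r + s) = ch (2 * n) (n + r) := by
  have reflect (s : ℤ) : ch n (r + s) = ch n (n - r - s) := by rw [← ch_sub n (r + s)]; ring_nf
  simp only [reflect]
  rw [sum_Icc_ch_mul_ch_sub n n ha hb, ← two_mul, ← ch_sub (2 * n) (n + r)]
  ring_nf

theorem sum_Icc_ch_sub_mul (n : ℕ) {a b k : ℤ} (ha : a ≤ k) (hb : k + n ≤ b) (F : ℤ → ℤ) :
    ∑ u ∈ Icc a b, ch n (u - k) * F u = ∑ s ∈ Icc (0 : ℤ) n, ch n s * F (s + k) := by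
  have outside : ∀ u ∈ Icc a b, u ∉ Icc k (k + n) → ch n (u - k) * F u = 0 := fun u _ hu => by
    rw [ch_eq_zero_s10 (by rw [mem_Icc] at hu ⊢; omega), zero_mul]
  have shift := sum_Icc_comp_sub_right (fun s => ch n s * F (s + k)) k (k + n) k
  simp only [sub_add_cancel, sub_self, add_sub_cancel_left] at shift
  rw [← sum_subset (Icc_subset_Icc ha hb) outside, shift]

theorem sum_Icc_sum_Icc_mul_ch_mul_ch (n : ℕ) {a b i j N : ℤ} (hai : a ≤ i) (haj : a ≤ j)
    (hib : i + n ≤ b) (hjb : j + n ≤ b) (hN : n ≤ N) (φ : ℤ → ℤ) :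
    ∑ u ∈ Icc a b, ∑ v ∈ Icc a b, φ (v - u) * (ch n (u - i) * ch n (v - j))
      = ∑ r ∈ Icc (-N) N, φ (r + (j - i)) * ch (2 * n) (n + r) := by
  calc ∑ u ∈ Icc a b, ∑ v ∈ Icc a b, φ (v - u) * (ch n (u - i) * ch n (v - j))
      = ∑ u ∈ Icc a b, ch n (u - i) * ∑ v ∈ Icc a b, ch n (v - j) * φ (v - u) := by
        refine sum_congr rfl fun u _ => ?_
        rw [mul_sum]
        exact sum_congr rfl fun v _ => by ring
    _ = ∑ s ∈ Icc (0 : ℤ) n, ch n s * ∑ t ∈ Icc (0 : ℤ) n, ch n t * φ (t + (j - i) - s) := by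
        simp only [sum_Icc_ch_sub_mul n haj hjb]
        rw [sum_Icc_ch_sub_mul n hai hib]
        exact sum_congr rfl fun s _ => congrArg _ (sum_congr rfl fun t _ => by congr 2; ring)
    _ = ∑ s ∈ Icc (0 : ℤ) n, ch n s * ∑ r ∈ Icc (-N) N, ch n (r + s) * φ (r + (j - i)) := by
        refine sum_congr rfl fun s hs => ?_
        rw [mem_Icc] at hs
        have window := sum_Icc_ch_sub_mul n (a := -N) (b := N) (k := -s) (by omega) (by omega)
          (fun r => φ (r + (j - i)))
        simp only [sub_neg_eq_add] at window
        rw [window]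
        exact congrArg _ (sum_congr rfl fun t _ => by congr 2; ring)
    _ = ∑ r ∈ Icc (-N) N, φ (r + (j - i)) * ch (2 * n) (n + r) := by
        simp only [mul_sum]
        rw [sum_comm]
        refine sum_congr rfl fun r _ => ?_
        rw [← sum_Icc_ch_mul_ch_add n le_rfl le_rfl r, mul_sum]
        exact sum_congr rfl fun s _ => by ring

theorem sign_sub_smul_eq_ite_sub_ite {R : Type*} [AddCommGroup R] (u v : ℤ) (x : R) :
    Int.sign (v - u) • x = (if u < v then x else 0) - (if v < u then x else 0) := by
  rcases lt_trichotomy u v with h | rfl | h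
  · simp [h, h.not_gt, Int.sign_eq_one_of_pos (sub_pos.2 h)]
  · simp
  · simp [h, h.not_gt, Int.sign_eq_neg_one_of_neg (sub_neg.2 h)]

theorem sum_sum_lt_sub_eq_sum_sum_sign_smul {R : Type*} [CommRing R] (f g : ℤ → R) (a b : ℤ) :
    ∑ v ∈ Icc a b, ∑ u ∈ Icc a (v - 1), (f u * g v - g u * f v)
      = ∑ u ∈ Icc a b, ∑ v ∈ Icc a b, Int.sign (v - u) • (f u * g v) := by
  have below (v : ℤ) (hv : v ∈ Icc a b) (h : ℤ → R) :
      ∑ u ∈ Icc a (v - 1), h u = ∑ u ∈ Icc a b, if u < v then h u else 0 := by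
    rw [← sum_filter]
    congr 1
    ext u
    simp only [mem_Icc, mem_filter] at hv ⊢
    omega
  calc ∑ v ∈ Icc a b, ∑ u ∈ Icc a (v - 1), (f u * g v - g u * f v)
      = ∑ v ∈ Icc a b, ∑ u ∈ Icc a b, (if u < v then f u * g v else 0)
          - ∑ v ∈ Icc a b, ∑ u ∈ Icc a b, (if u < v then g u * f v else 0) := by
        rw [← sum_sub_distrib]
        refine sum_congr rfl fun v hv => ?_
        rw [below v hv, ← sum_sub_distrib]
        exact sum_congr rfl fun u _ => by split_ifs <;> simp
    _ = ∑ u ∈ Icc a b, ∑ v ∈ Icc a b, Int.sign (v - u) • (f u * g v) := by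
        simp only [sign_sub_smul_eq_ite_sub_ite, sum_sub_distrib]
        rw [sum_comm]
        congr 1
        exact sum_congr rfl fun _ _ => sum_congr rfl fun _ _ => by rw [mul_comm]

theorem sum_Icc_sign_add_smul_of_even {M : Type*} [AddCommGroup M] (w : ℤ → M)
    (hw : ∀ r, w (-r) = w r) {d N : ℤ} (hd : 0 ≤ d) (hN : d ≤ N) :
    ∑ r ∈ Icc (-N) N, Int.sign (r + d) • w r = ∑ r ∈ Icc (1 - d) d, w r := by
  induction N, hN using Int.leInduction with
  | base =>
    rw [show Icc (-d) d = insert (-d) (Icc (1 - d) d) by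
        ext; simp only [mem_Icc, mem_insert]; omega,
      sum_insert (by simp), neg_add_cancel, Int.sign_zero, zero_smul, zero_add]
    refine sum_congr rfl fun r hr => ?_
    rw [Int.sign_eq_one_of_pos (by rw [mem_Icc] at hr; omega), one_smul]
  | succ N hN ih =>
    rw [show Icc (-(N + 1)) (N + 1) = insert (-(N + 1)) (insert (N + 1) (Icc (-N) N)) by
        ext; simp only [mem_Icc, mem_insert]; omega,
      sum_insert (by simp only [mem_Icc, mem_insert]; omega),
      sum_insert (by simp only [mem_Icc]; omega), ih,
      Int.sign_eq_neg_one_of_neg (by omega), Int.sign_eq_one_of_pos (by omega), hw]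
    abel

theorem pfaffian_entry_evaluation_general (n m : ℕ)
    (i j : ℤ) (hi : -(m : ℤ) + 1 ≤ i) (hij : i < j) (hj : j ≤ (m : ℤ)) :
    ∑ v ∈ Finset.Icc (-(m : ℤ) + 1) ((n : ℤ) + m),
      ∑ u ∈ Finset.Icc (-(m : ℤ) + 1) (v - 1),
        (ch (n : ℤ) (u - i) * ch (n : ℤ) (v - j) - ch (n : ℤ) (u - j) * ch (n : ℤ) (v - i))
    = ssum (i - j + 1) (j - i) (fun r => ch (2 * (n : ℤ)) ((n : ℤ) + r)) := by
  have even (r : ℤ) : ch (2 * n) (n + -r) = ch (2 * n) (n + r) := by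
    rw [← ch_sub]; ring_nf
  calc _ = ∑ u ∈ Icc (-(m : ℤ) + 1) (n + m), ∑ v ∈ Icc (-(m : ℤ) + 1) (n + m),
          Int.sign (v - u) • (ch n (u - i) * ch n (v - j)) :=
        sum_sum_lt_sub_eq_sum_sum_sign_smul (fun u => ch n (u - i)) (fun v => ch n (v - j)) _ _
    _ = ∑ r ∈ Icc (-(n + (j - i))) (n + (j - i)), Int.sign (r + (j - i)) • ch (2 * n) (n + r) := by
        simp only [smul_eq_mul]
        exact sum_Icc_sum_Icc_mul_ch_mul_ch n (by omega) (by omega) (by omega) (by omega)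
          (by omega) _
    _ = ∑ r ∈ Icc (i - j + 1) (j - i), ch (2 * n) (n + r) := by
        rw [sum_Icc_sign_add_smul_of_even _ even (by omega) (by omega),
          show 1 - (j - i) = i - j + 1 by ring]
    _ = _ := by rw [ssum, if_pos (by omega)]

/-- The Chu–Vandermonde computation in the proof of Proposition 3.2:
`Σ_{-m+1 ≤ u < v ≤ n+m} (C(n, u-i) C(n, v-j) - C(n, u-j) C(n, v-i))
= Σ_{r=i-j+1}^{j-i} C(2n, n+r)`. -/
theorem pfaffian_entry_evaluation (n m : ℕ) (hn : 0 < n) (hm : 0 < m)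
    (i j : ℤ) (hi : -(m : ℤ) + 1 ≤ i) (hij : i < j) (hj : j ≤ (m : ℤ)) :
    ∑ v ∈ Finset.Icc (-(m : ℤ) + 1) ((n : ℤ) + m),
      ∑ u ∈ Finset.Icc (-(m : ℤ) + 1) (v - 1),
        (ch (n : ℤ) (u - i) * ch (n : ℤ) (v - j) - ch (n : ℤ) (u - j) * ch (n : ℤ) (v - i))
    = ssum (i - j + 1) (j - i) (fun r => ch (2 * (n : ℤ)) ((n : ℤ) + r)) :=
  pfaffian_entry_evaluation_general n m i j hi hij hj
end

section
/- Let d be a positive integer, R a commutative ring, D an arbitrary d × d matrix over R, and E a skew-symmetric d × d matrix over R. Then the Pfaffian of the skew-symmetric 2d × 2d block matrix [[0, D], [−Dᵀ, E]] equals (−1)^{C(d,2)} det(D). -/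
/-- Number of crossings of the perfect matching given by the involution `f`:
quadruples `i < j < f i < f j` (i.e. `i` matched with `f i`, `j` with `f j`, crossing). -/
def pfCrossings {N : ℕ} (f : Equiv.Perm (Fin N)) : ℕ :=
  (Finset.univ.filter (fun q : Fin N × Fin N =>
      q.1 < q.2 ∧ q.2 < f q.1 ∧ f q.1 < f q.2)).card

/-- The Pfaffian of a `2N × 2N` matrix, defined as the sum over all perfect matchings
(encoded as fixed-point-free involutions) of the sign `(-1)^(number of crossings)` times
the product of the entries `A i (f i)` over matched pairs `i < f i`. -/
def pfaffian {N : ℕ} {R : Type*} [CommRing R] (A : Matrix (Fin (2 * N)) (Fin (2 * N)) R) : R :=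
  ∑ f ∈ Finset.univ.filter
      (fun f : Equiv.Perm (Fin (2 * N)) => (∀ i, f (f i) = i) ∧ ∀ i, f i ≠ i),
    (-1 : R) ^ pfCrossings f *
      ∏ i ∈ Finset.univ.filter (fun i => i < f i), A i (f i)

/-- The skew-symmetric block matrix `[[0, D], [-Dᵀ, E]]` on `Fin (2d)`. -/
def blockMat {R : Type*} [CommRing R] {d : ℕ} (D E : Matrix (Fin d) (Fin d) R) :
    Matrix (Fin (2 * d)) (Fin (2 * d)) R :=
  fun p q =>
    if hp : (p : ℕ) < d then
      if hq : (q : ℕ) < d then 0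
      else D ⟨p, hp⟩ ⟨(q : ℕ) - d, by have := q.isLt; omega⟩
    else
      if hq : (q : ℕ) < d then
        -D ⟨q, hq⟩ ⟨(p : ℕ) - d, by have := p.isLt; omega⟩
      else E ⟨(p : ℕ) - d, by have := p.isLt; omega⟩ ⟨(q : ℕ) - d, by have := q.isLt; omega⟩

/-! The upper-left block vanishes, so a perfect matching contributes to the Pfaffian only if it
pairs every index `i < d` with some `d + σ i`, for a permutation `σ` of `Fin d`; its weight is
then `∏ i, D i (σ i)`. Two such pairs `(i, d + σ i)`, `(j, d + σ j)` with `i < j` cross exactly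
when `σ i < σ j`, so the number of crossings is `d.choose 2` minus the number of inversions of
`σ`, and the sign of the matching is `(-1) ^ d.choose 2 * sign σ`. -/

open Finset Equiv

namespace Equiv.Perm

variable {n : ℕ}

def inversions (σ : Perm (Fin n)) : Finset (Fin n × Fin n) :=
  univ.filter fun q => q.1 < q.2 ∧ σ q.2 < σ q.1

def nonInversions (σ : Perm (Fin n)) : Finset (Fin n × Fin n) :=
  univ.filter fun q => q.1 < q.2 ∧ σ q.1 < σ q.2

theorem sign_eq_signAux (σ : Perm (Fin n)) : sign σ = signAux σ :=
  swap_induction_on σ (by simp) fun f x y hxy ih => by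
    rw [signAux_mul, sign_mul, ih, signAux_swap hxy, sign_swap hxy]

theorem sign_eq_neg_one_pow_card_inversions (σ : Perm (Fin n)) :
    sign σ = (-1) ^ #(inversions σ) := by
  rw [sign_eq_signAux, signAux, prod_ite, prod_const, prod_const_one, mul_one]
  congr 1
  refine card_nbij' (fun x => (x.2, x.1)) (fun q => ⟨q.2, q.1⟩) ?_ ?_ (fun _ _ => rfl)
    (fun _ _ => rfl)
  · rintro ⟨a, b⟩ h
    simp only [coe_filter, mem_finPairsLT, Set.mem_ofPred_eq, inversions, mem_univ,
      true_and] at h ⊢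
    exact ⟨h.1, h.2.lt_of_ne fun he => h.1.ne' (σ.injective he)⟩
  · rintro ⟨a, b⟩ h
    simp only [coe_filter, mem_finPairsLT, Set.mem_ofPred_eq, inversions, mem_univ,
      true_and] at h ⊢
    exact ⟨h.1, h.2.le⟩

theorem card_inversions_add_card_nonInversions (σ : Perm (Fin n)) :
    #(inversions σ) + #(nonInversions σ) = n.choose 2 := by
  have hpairs := card_product_filter_lt (s := (univ : Finset (Fin n)))
  rw [card_univ, Fintype.card_fin, univ_product_univ] at hpairs
  rw [← hpairs,
    ← card_filter_add_card_filter_not (s := univ.filter fun q : Fin n × Fin n => q.1 < q.2)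
      (fun q => σ q.2 < σ q.1), filter_filter, filter_filter, inversions, nonInversions]
  congr 2
  ext q
  simp only [mem_filter, mem_univ, true_and]
  refine and_congr_right fun h => ?_
  rw [not_lt, le_iff_lt_or_eq, or_iff_left fun he => h.ne (σ.injective he)]

theorem neg_one_pow_card_nonInversions {R : Type*} [CommRing R] (σ : Perm (Fin n)) :
    (-1 : R) ^ #(nonInversions σ) = (-1) ^ n.choose 2 * (sign σ : ℤ) := by
  rw [← card_inversions_add_card_nonInversions σ, sign_eq_neg_one_pow_card_inversions, pow_add]
  push_cast
  rw [mul_right_comm, ← pow_add, Even.neg_one_pow ⟨_, rfl⟩, one_mul]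

end Equiv.Perm

section BlockMatching

variable {d : ℕ} {R : Type*} [CommRing R]

def finSumFinTwoMul (d : ℕ) : Fin d ⊕ Fin d ≃ Fin (2 * d) :=
  finSumFinEquiv.trans (finCongr (two_mul d).symm)

local notation "ι" => finSumFinTwoMul _

@[simp] theorem val_finSumFinTwoMul_inl (i : Fin d) : (ι (Sum.inl i) : ℕ) = i := rfl

@[simp] theorem val_finSumFinTwoMul_inr (i : Fin d) : (ι (Sum.inr i) : ℕ) = d + i := rfl

@[simp] theorem finSumFinTwoMul_inl_lt_inl {i j : Fin d} :
    ι (Sum.inl i) < ι (Sum.inl j) ↔ i < j := by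
  simp only [Fin.lt_def, val_finSumFinTwoMul_inl]

@[simp] theorem finSumFinTwoMul_inr_lt_inr {i j : Fin d} :
    ι (Sum.inr i) < ι (Sum.inr j) ↔ i < j := by
  simp only [Fin.lt_def, val_finSumFinTwoMul_inr]; omega

@[simp] theorem finSumFinTwoMul_inl_lt_inr (i j : Fin d) :
    ι (Sum.inl i) < ι (Sum.inr j) := by
  simp only [Fin.lt_def, val_finSumFinTwoMul_inl, val_finSumFinTwoMul_inr]; omega

@[simp] theorem not_finSumFinTwoMul_inr_lt_inl (i j : Fin d) :
    ¬ ι (Sum.inr i) < ι (Sum.inl j) := by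
  simp only [Fin.lt_def, val_finSumFinTwoMul_inl, val_finSumFinTwoMul_inr]; omega

theorem blockMat_inl_inl (D E : Matrix (Fin d) (Fin d) R) (i j : Fin d) :
    blockMat D E (ι (Sum.inl i)) (ι (Sum.inl j)) = 0 := by
  simp [blockMat]

theorem blockMat_inl_inr (D E : Matrix (Fin d) (Fin d) R) (i j : Fin d) :
    blockMat D E (ι (Sum.inl i)) (ι (Sum.inr j)) = D i j := by
  simp [blockMat]

def blockMatching (σ : Perm (Fin d)) : Perm (Fin (2 * d)) :=
  (finSumFinTwoMul d).permCongr ((σ.sumCongr σ⁻¹).trans (Equiv.sumComm _ _))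

@[simp] theorem blockMatching_inl (σ : Perm (Fin d)) (i : Fin d) :
    blockMatching σ (ι (Sum.inl i)) = ι (Sum.inr (σ i)) := by
  simp [blockMatching, permCongr_apply]

@[simp] theorem blockMatching_inr (σ : Perm (Fin d)) (i : Fin d) :
    blockMatching σ (ι (Sum.inr i)) = ι (Sum.inl (σ⁻¹ i)) := by
  simp [blockMatching, permCongr_apply]

theorem blockMatching_involutive (σ : Perm (Fin d)) : Function.Involutive (blockMatching σ) := by
  intro x
  obtain ⟨x | x, rfl⟩ := (finSumFinTwoMul d).surjective x <;> simp

theorem blockMatching_apply_ne (σ : Perm (Fin d)) (x : Fin (2 * d)) :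
    blockMatching σ x ≠ x := by
  obtain ⟨x | x, rfl⟩ := (finSumFinTwoMul d).surjective x <;> simp

theorem blockMatching_injective : Function.Injective (blockMatching (d := d)) := fun σ τ h =>
  Equiv.ext fun i => by simpa using congr($h (ι (Sum.inl i)))

theorem pfCrossings_blockMatching (σ : Perm (Fin d)) :
    pfCrossings (blockMatching σ) = #σ.nonInversions := by
  let top : Fin d ↪ Fin (2 * d) := Function.Embedding.inl.trans (finSumFinTwoMul d).toEmbedding
  rw [pfCrossings, Perm.nonInversions, ← card_map (top.prodMap top)]
  congr 1
  ext ⟨x, y⟩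
  obtain ⟨x | x, rfl⟩ := (finSumFinTwoMul d).surjective x <;>
    obtain ⟨y | y, rfl⟩ := (finSumFinTwoMul d).surjective y <;>
    simp [top]

theorem filter_lt_blockMatching (σ : Perm (Fin d)) :
    univ.filter (fun x => x < blockMatching σ x) =
      univ.map (Function.Embedding.inl.trans (finSumFinTwoMul d).toEmbedding) := by
  ext x
  obtain ⟨x | x, rfl⟩ := (finSumFinTwoMul d).surjective x <;> simp

theorem prod_blockMat_blockMatching (D E : Matrix (Fin d) (Fin d) R) (σ : Perm (Fin d)) :
    ∏ x ∈ univ.filter (fun x => x < blockMatching σ x), blockMat D E x (blockMatching σ x) =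
      ∏ i, D i (σ i) := by
  simp [filter_lt_blockMatching, prod_map, blockMat_inl_inr]

theorem exists_blockMatching_eq {f : Perm (Fin (2 * d))} (hf : Function.Involutive f)
    (h : ∀ i, ∃ j, f (ι (Sum.inl i)) = ι (Sum.inr j)) : ∃ σ, blockMatching σ = f := by
  choose s hs using h
  have hs_inj : Function.Injective s := fun i i' hii' => by
    simpa [← hs, hii'] using hs i
  let σ := Equiv.ofBijective s (Finite.injective_iff_bijective.1 hs_inj)
  refine ⟨σ, Equiv.ext fun x => ?_⟩
  obtain ⟨x | x, rfl⟩ := (finSumFinTwoMul d).surjective x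
  · simp [σ, hs]
  · obtain ⟨i, rfl⟩ := σ.surjective x
    rw [blockMatching_inr, Perm.inv_def, symm_apply_apply, ofBijective_apply, ← hs, hf]

theorem prod_blockMat_eq_zero_of_ne_blockMatching (D E : Matrix (Fin d) (Fin d) R)
    {f : Perm (Fin (2 * d))} (hf : Function.Involutive f) (hne : ∀ x, f x ≠ x)
    (hfσ : ∀ σ, blockMatching σ ≠ f) :
    ∏ x ∈ univ.filter (fun x => x < f x), blockMat D E x (f x) = 0 := by
  obtain ⟨i, hi⟩ : ∃ i, ∀ j, f (ι (Sum.inl i)) ≠ ι (Sum.inr j) := by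
    by_contra! h
    obtain ⟨σ, rfl⟩ := exists_blockMatching_eq hf h
    exact hfσ σ rfl
  obtain ⟨k, hk⟩ : ∃ k, f (ι (Sum.inl i)) = ι (Sum.inl k) := by
    obtain ⟨k | k, hk⟩ := (finSumFinTwoMul d).surjective (f (ι (Sum.inl i)))
    exacts [⟨k, hk.symm⟩, absurd hk.symm (hi k)]
  have hk' : f (ι (Sum.inl k)) = ι (Sum.inl i) := by rw [← hk, hf]
  -- `f` pairs the upper indices `i` and `k`; the smaller one picks up a zero entry of `blockMat`.
  rcases (hne (ι (Sum.inl i))).lt_or_gt with hlt | hgt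
  · refine prod_eq_zero (i := ι (Sum.inl k)) ?_ ?_
    · simpa [hk', hk] using hlt
    · rw [hk', blockMat_inl_inl]
  · refine prod_eq_zero (i := ι (Sum.inl i)) ?_ ?_
    · simpa using hgt
    · rw [hk, blockMat_inl_inl]

end BlockMatching

theorem pfaffian_block_general (d : ℕ) {R : Type*} [CommRing R]
    (D E : Matrix (Fin d) (Fin d) R) :
    pfaffian (blockMat D E) = (-1 : R) ^ d.choose 2 * D.det := by
  have hsub : univ.map ⟨blockMatching, blockMatching_injective⟩ ⊆ univ.filter
      (fun f : Perm (Fin (2 * d)) => (∀ i, f (f i) = i) ∧ ∀ i, f i ≠ i) := by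
    simpa [subset_iff] using fun σ => ⟨blockMatching_involutive σ, blockMatching_apply_ne σ⟩
  rw [pfaffian, ← sum_subset hsub fun f hf hfσ => ?vanish, sum_map, ← Matrix.det_transpose,
    Matrix.det_apply', mul_sum]
  case vanish =>
    simp only [mem_filter, mem_univ, true_and, mem_map, Function.Embedding.coeFn_mk,
      not_exists] at hf hfσ
    rw [prod_blockMat_eq_zero_of_ne_blockMatching D E hf.1 hf.2 hfσ, mul_zero]
  refine sum_congr rfl fun σ _ => ?_
  simp [pfCrossings_blockMatching, prod_blockMat_blockMatching,
    Perm.neg_one_pow_card_nonInversions, mul_assoc]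

/-- The Pfaffian identity used in the proof of Lemma 4.1: for any `d × d` matrix `D`
and any skew-symmetric `d × d` matrix `E`,
`Pf [[0, D], [-Dᵀ, E]] = (-1)^(d choose 2) det D`. -/
theorem pfaffian_block (d : ℕ) (hd : 0 < d) {R : Type*} [CommRing R]
    (D E : Matrix (Fin d) (Fin d) R) (hE : ∀ i j, E j i = -E i j) :
    pfaffian (blockMat D E) = (-1 : R) ^ d.choose 2 * D.det :=
  pfaffian_block_general d D E
end
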